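/- arXiv:math/0608352 — 3 statements merged into one kernel-verified Lean document; each statement's English description precedes it below -/
import Mathlib

section
/- For every N ≥ 1, all integers m ≥ 0 and k ≥ 1, every index 1 ≤ j ≤ r, and every count vector n ∈ ℤ_+^r with Σ_{i=1}^r n_i = N, writing c = P_{N,m} P_{N,m+1} ⋯ P_{N,m+k-1} e_j ∈ ℝ^r for the j-th column of the product of the k transition matrices (e_j the j-th standard basis vector), the Markov chain of type counts satisfies E[ (n^N_j(m+k) − n^N_j(m))^2 | n^N(m) = n ] = (n·c)^2 + n·c − Σ_{i=1}^r c_i^2 n_i − 2 (n·c) n_j + n_j^2, where n·c = Σ_{i=1}^r n_i c_i. -/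
open scoped BigOperators
open Finset

noncomputable section

/-- A Q-matrix: nonnegative off-diagonal entries, rows summing to zero. -/
def IsQMatrix {r : ℕ} (M : Matrix (Fin r) (Fin r) ℝ) : Prop :=
  (∀ i j, i ≠ j → 0 ≤ M i j) ∧ ∀ i, ∑ j, M i j = 0

/-- A stochastic matrix: nonnegative entries, rows summing to one. -/
def IsStochastic {r : ℕ} (M : Matrix (Fin r) (Fin r) ℝ) : Prop :=
  (∀ i j, 0 ≤ M i j) ∧ ∀ i, ∑ j, M i j = 1

/-- Multinomial probability weight `(∑β)!/∏ β_j! · ∏ p_j^{β_j}`. -/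
def multinomialWeight {r : ℕ} (p : Fin r → ℝ) (β : Fin r → ℕ) : ℝ :=
  (Nat.multinomial Finset.univ β : ℝ) * ∏ j, p j ^ β j

/-- One-step conditional expectation `E[g(n(k+1)) | n(k) = n]` for the internal dynamics
chain with transition matrix `P`: each of the `n i` agents of type `i` independently moves
to type `j` with probability `P i j`; the sum runs over all arrays `ξ` whose `i`-th row
sums to `n i`, the new state being the vector of column sums of `ξ`. -/
def stepE {r : ℕ} (P : Matrix (Fin r) (Fin r) ℝ) (g : (Fin r → ℕ) → ℝ) (n : Fin r → ℕ) : ℝ :=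
  ∑ ξ ∈ Fintype.piFinset fun i => Finset.Nat.antidiagonalTuple r (n i),
    (∏ i, multinomialWeight (P i) (ξ i)) * g fun j => ∑ i, ξ i j

/-- `chainE P m k g n = E[g(n(m+k)) | n(m) = n]` for the time-inhomogeneous chain with
transition matrices `P m, P (m+1), …`. -/
def chainE {r : ℕ} (P : ℕ → Matrix (Fin r) (Fin r) ℝ) :
    ℕ → ℕ → ((Fin r → ℕ) → ℝ) → (Fin r → ℕ) → ℝ
  | _, 0, g => g
  | m, k+1, g => stepE (P m) (chainE P (m+1) k g)
open scoped Nat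

/-! ### Auxiliary lemmas -/


lemma key_mult {r : ℕ} (γ : Fin r → ℕ) (j : Fin r) :
    Nat.multinomial Finset.univ (Function.update γ j (γ j + 1)) * (γ j + 1)
      = (∑ i, γ i + 1) * Nat.multinomial Finset.univ γ := by
  have hB : 0 < ∏ i, (γ i)! := Finset.prod_pos fun i _ => Nat.factorial_pos _
  apply Nat.eq_of_mul_eq_mul_left hB
  have hup : ∀ (f : ℕ → ℕ),
      (fun i => f (Function.update γ j (γ j + 1) i))
        = Function.update (fun i => f (γ i)) j (f (γ j + 1)) := by
    intro f; ext i
    rcases eq_or_ne i j with h | h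
    · subst h; simp
    · simp [Function.update_of_ne h]
  have h1 : ∏ i, (Function.update γ j (γ j + 1) i)! = (γ j + 1) * ∏ i, (γ i)! := by
    calc ∏ i, (Function.update γ j (γ j + 1) i)!
        = ∏ i, Function.update (fun i => (γ i)!) j ((γ j + 1)!) i := by
          rw [← hup Nat.factorial]
      _ = (γ j + 1)! * ∏ i ∈ Finset.univ \ {j}, (γ i)! :=
          Finset.prod_update_of_mem (Finset.mem_univ j) _ _
      _ = (γ j + 1) * ((γ j)! * ∏ i ∈ Finset.univ \ {j}, (γ i)!) := by
          rw [Nat.factorial_succ, mul_assoc]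
      _ = (γ j + 1) * ∏ i, (γ i)! := by
          congr 1
          exact (Finset.prod_eq_mul_prod_sdiff_singleton_of_mem (Finset.mem_univ j) (fun i => (γ i)!)).symm
  have h2 : ∑ i, Function.update γ j (γ j + 1) i = ∑ i, γ i + 1 := by
    rw [Finset.sum_update_of_mem (Finset.mem_univ j),
      Finset.sum_eq_add_sum_sdiff_singleton_of_mem (Finset.mem_univ j) γ]
    omega
  have s1 := Nat.multinomial_spec Finset.univ (Function.update γ j (γ j + 1))
  have s2 := Nat.multinomial_spec Finset.univ γ
  have key : (γ j + 1) * ((∏ i, (γ i)!) * Nat.multinomial Finset.univ (Function.update γ j (γ j + 1)))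
      = (∑ i, γ i + 1) * ((∏ i, (γ i)!) * Nat.multinomial Finset.univ γ) := by
    rw [s2]
    calc (γ j + 1) * ((∏ i, (γ i)!) * Nat.multinomial Finset.univ (Function.update γ j (γ j + 1)))
        = ((γ j + 1) * ∏ i, (γ i)!) * Nat.multinomial Finset.univ (Function.update γ j (γ j + 1)) := by ring
      _ = (∏ i, (Function.update γ j (γ j + 1) i)!) * Nat.multinomial Finset.univ (Function.update γ j (γ j + 1)) := by rw [h1]
      _ = (∑ i, Function.update γ j (γ j + 1) i)! := s1
      _ = (∑ i, γ i + 1)! := by rw [h2]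
      _ = (∑ i, γ i + 1) * (∑ i, γ i)! := Nat.factorial_succ _
  calc (∏ i, (γ i)!) * (Nat.multinomial Finset.univ (Function.update γ j (γ j + 1)) * (γ j + 1))
      = (γ j + 1) * ((∏ i, (γ i)!) * Nat.multinomial Finset.univ (Function.update γ j (γ j + 1))) := by ring
    _ = (∑ i, γ i + 1) * ((∏ i, (γ i)!) * Nat.multinomial Finset.univ γ) := key
    _ = (∏ i, (γ i)!) * ((∑ i, γ i + 1) * Nat.multinomial Finset.univ γ) := by ring

lemma key_weight {r : ℕ} (p : Fin r → ℝ) (γ : Fin r → ℕ) (j : Fin r) :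
    multinomialWeight p (Function.update γ j (γ j + 1)) * ((γ j : ℝ) + 1)
      = ((∑ i, γ i : ℕ) + 1 : ℝ) * p j * multinomialWeight p γ := by
  have hm := key_mult γ j
  have hprod : ∏ i, p i ^ (Function.update γ j (γ j + 1) i) = p j * ∏ i, p i ^ γ i := by
    calc ∏ i, p i ^ (Function.update γ j (γ j + 1) i)
        = ∏ i, Function.update (fun i => p i ^ γ i) j (p j ^ (γ j + 1)) i := by
          apply Finset.prod_congr rfl
          intro i _
          rcases eq_or_ne i j with h | h
          · subst h; simp
          · simp [Function.update_of_ne h]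
      _ = p j ^ (γ j + 1) * ∏ i ∈ Finset.univ \ {j}, p i ^ γ i :=
          Finset.prod_update_of_mem (Finset.mem_univ j) _ _
      _ = p j * (p j ^ γ j * ∏ i ∈ Finset.univ \ {j}, p i ^ γ i) := by
          rw [pow_succ]; ring
      _ = p j * ∏ i, p i ^ γ i := by
          congr 1
          exact (Finset.prod_eq_mul_prod_sdiff_singleton_of_mem (Finset.mem_univ j) (fun i => p i ^ γ i)).symm
  have hmr : (Nat.multinomial Finset.univ (Function.update γ j (γ j + 1)) : ℝ) * ((γ j : ℝ) + 1)
      = ((∑ i, γ i : ℕ) + 1 : ℝ) * (Nat.multinomial Finset.univ γ : ℝ) := by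
    exact_mod_cast congrArg (fun x : ℕ => (x : ℝ)) hm
  unfold multinomialWeight
  rw [hprod]
  linear_combination ((p j * ∏ i, p i ^ γ i)) * hmr

/-- The key shift identity for multinomial sums. -/
lemma shift {r : ℕ} (p : Fin r → ℝ) (j : Fin r) (n : ℕ) (f : (Fin r → ℕ) → ℝ) :
    ∑ β ∈ Finset.Nat.antidiagonalTuple r (n+1),
        multinomialWeight p β * (β j : ℝ) * f β
      = ((n : ℝ) + 1) * p j * ∑ γ ∈ Finset.Nat.antidiagonalTuple r n,
          multinomialWeight p γ * f (Function.update γ j (γ j + 1)) := by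
  classical
  rw [Finset.mul_sum]
  rw [← Finset.sum_filter_of_ne (p := fun β => β j ≠ 0)
    (fun β _ h => by
      intro hb
      apply h
      rw [hb]
      push_cast
      ring)]
  refine Finset.sum_nbij' (i := fun β => Function.update β j (β j - 1))
      (j := fun γ => Function.update γ j (γ j + 1)) ?_ ?_ ?_ ?_ ?_
  · intro β hβ
    simp only [Finset.mem_filter, Finset.Nat.mem_antidiagonalTuple] at hβ
    rw [Finset.Nat.mem_antidiagonalTuple]
    rw [Finset.sum_update_of_mem (Finset.mem_univ j)]
    rw [Finset.sum_eq_add_sum_sdiff_singleton_of_mem (Finset.mem_univ j) β] at hβ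
    omega
  · intro γ hγ
    rw [Finset.Nat.mem_antidiagonalTuple] at hγ
    simp only [Finset.mem_filter, Finset.Nat.mem_antidiagonalTuple]
    constructor
    · rw [Finset.sum_update_of_mem (Finset.mem_univ j),
        Finset.sum_eq_add_sum_sdiff_singleton_of_mem (Finset.mem_univ j) γ] at *
      omega
    · simp
  · intro β hβ
    simp only [Finset.mem_filter] at hβ
    have h1 : Function.update β j (β j - 1) j = β j - 1 := Function.update_self _ _ _
    rw [Function.update_idem, h1]
    have : β j - 1 + 1 = β j := Nat.succ_pred_eq_of_pos (Nat.pos_of_ne_zero hβ.2)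
    rw [this, Function.update_eq_self]
  · intro γ _
    have h1 : Function.update γ j (γ j + 1) j = γ j + 1 := Function.update_self _ _ _
    rw [Function.update_idem, h1]
    simp [Function.update_eq_self]
  · intro β hβ
    simp only [Finset.mem_filter, Finset.Nat.mem_antidiagonalTuple] at hβ
    obtain ⟨hsum, hne⟩ := hβ
    set γ := Function.update β j (β j - 1) with hγdef
    have hγj : γ j = β j - 1 := Function.update_self _ _ _
    have hback : Function.update γ j (γ j + 1) = β := by
      rw [hγdef, Function.update_idem, Function.update_self]
      have : β j - 1 + 1 = β j := Nat.succ_pred_eq_of_pos (Nat.pos_of_ne_zero hne)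
      rw [this, Function.update_eq_self]
    have hsγ : ∑ i, γ i = n := by
      rw [hγdef, Finset.sum_update_of_mem (Finset.mem_univ j)]
      rw [Finset.sum_eq_add_sum_sdiff_singleton_of_mem (Finset.mem_univ j) β] at hsum
      omega
    have hkw := key_weight p γ j
    rw [hback, hsγ] at hkw
    have hcast : (γ j : ℝ) + 1 = (β j : ℝ) := by
      rw [hγj]
      have : β j - 1 + 1 = β j := Nat.succ_pred_eq_of_pos (Nat.pos_of_ne_zero hne)
      exact_mod_cast congrArg (fun x : ℕ => (x : ℝ)) this
    rw [hcast] at hkw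
    calc multinomialWeight p β * (β j : ℝ) * f β
        = (multinomialWeight p β * (β j : ℝ)) * f (Function.update γ j (γ j + 1)) := by
          rw [hback]
      _ = (((n : ℝ) + 1) * p j * multinomialWeight p γ) * f (Function.update γ j (γ j + 1)) := by
          rw [hkw]
      _ = ((n : ℝ) + 1) * p j * (multinomialWeight p γ * f (Function.update γ j (γ j + 1))) := by
          ring

lemma weight_zero {r : ℕ} (p : Fin r → ℝ) : multinomialWeight p 0 = 1 := by
  unfold multinomialWeight
  have : Nat.multinomial Finset.univ (0 : Fin r → ℕ) = 1 := by
    have := Nat.multinomial_spec Finset.univ (0 : Fin r → ℕ)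
    simpa using this
  simp [this]

lemma sum_weight_one {r : ℕ} (p : Fin r → ℝ) (hp : ∑ i, p i = 1) (n : ℕ) :
    ∑ β ∈ Finset.Nat.antidiagonalTuple r n, multinomialWeight p β = 1 := by
  induction n with
  | zero =>
    rw [Finset.Nat.antidiagonalTuple_zero_right, Finset.sum_singleton, weight_zero]
  | succ n ih =>
    have h := fun j => shift p j n (fun _ => (1 : ℝ))
    have hL : ∑ j, ∑ β ∈ Finset.Nat.antidiagonalTuple r (n+1),
        multinomialWeight p β * (β j : ℝ) * 1
        = ((n : ℝ) + 1) * ∑ β ∈ Finset.Nat.antidiagonalTuple r (n+1), multinomialWeight p β := by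
      rw [Finset.sum_comm, Finset.mul_sum]
      apply Finset.sum_congr rfl
      intro β hβ
      rw [Finset.Nat.mem_antidiagonalTuple] at hβ
      have : ∑ j, multinomialWeight p β * (β j : ℝ) * 1
          = multinomialWeight p β * ((∑ j, (β j : ℕ) : ℕ) : ℝ) := by
        push_cast
        rw [Finset.mul_sum]
        apply Finset.sum_congr rfl
        intros; ring
      rw [this, hβ]
      push_cast
      ring
    have hR : ∑ j, ((n : ℝ) + 1) * p j * ∑ γ ∈ Finset.Nat.antidiagonalTuple r n,
        multinomialWeight p γ * 1 = ((n : ℝ) + 1) := by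
      simp_rw [mul_one, ih]
      rw [← Finset.sum_mul, ← Finset.mul_sum]
      rw [hp]
      ring
    have heq : ((n : ℝ) + 1) * ∑ β ∈ Finset.Nat.antidiagonalTuple r (n+1), multinomialWeight p β
        = ((n : ℝ) + 1) * 1 := by
      rw [mul_one, ← hL, ← hR]
      exact Finset.sum_congr rfl fun j _ => h j
    have hne : ((n : ℝ) + 1) ≠ 0 := by positivity
    exact mul_left_cancel₀ hne heq

lemma sum_weight_mul {r : ℕ} (p : Fin r → ℝ) (hp : ∑ i, p i = 1) (j : Fin r) (n : ℕ) :
    ∑ β ∈ Finset.Nat.antidiagonalTuple r n, multinomialWeight p β * (β j : ℝ)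
      = (n : ℝ) * p j := by
  cases n with
  | zero =>
    rw [Finset.Nat.antidiagonalTuple_zero_right, Finset.sum_singleton]
    simp
  | succ n =>
    have h := shift p j n (fun _ => (1 : ℝ))
    simp_rw [mul_one] at h
    rw [h, sum_weight_one p hp]
    push_cast
    ring

lemma sum_weight_mul2 {r : ℕ} (p : Fin r → ℝ) (hp : ∑ i, p i = 1) (j l : Fin r) (n : ℕ) :
    ∑ β ∈ Finset.Nat.antidiagonalTuple r n, multinomialWeight p β * (β j : ℝ) * (β l : ℝ)
      = (n : ℝ) * ((n : ℝ) - 1) * p j * p l + (if j = l then (n : ℝ) * p j else 0) := by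
  cases n with
  | zero =>
    rw [Finset.Nat.antidiagonalTuple_zero_right, Finset.sum_singleton]
    simp
  | succ n =>
    have h := shift p j n (fun β => (β l : ℝ))
    rw [h]
    have hinner : ∀ γ : Fin r → ℕ,
        ((Function.update γ j (γ j + 1) l : ℕ) : ℝ)
          = (γ l : ℝ) + (if j = l then 1 else 0) := by
      intro γ
      rcases eq_or_ne j l with hjl | hjl
      · subst hjl
        rw [Function.update_self]
        push_cast
        simp
      · rw [Function.update_of_ne (Ne.symm hjl)]
        simp [hjl]
    have : ∑ γ ∈ Finset.Nat.antidiagonalTuple r n,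
        multinomialWeight p γ * ((Function.update γ j (γ j + 1) l : ℕ) : ℝ)
        = (n : ℝ) * p l + (if j = l then 1 else 0) := by
      calc ∑ γ ∈ Finset.Nat.antidiagonalTuple r n,
          multinomialWeight p γ * ((Function.update γ j (γ j + 1) l : ℕ) : ℝ)
          = ∑ γ ∈ Finset.Nat.antidiagonalTuple r n,
            (multinomialWeight p γ * (γ l : ℝ)
              + multinomialWeight p γ * (if j = l then 1 else 0)) := by
            apply Finset.sum_congr rfl
            intro γ _
            rw [hinner γ]
            ring
        _ = (n : ℝ) * p l + (if j = l then 1 else 0) := by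
            rw [Finset.sum_add_distrib, sum_weight_mul p hp l n, ← Finset.sum_mul,
              sum_weight_one p hp]
            ring
    rw [this]
    rcases eq_or_ne j l with hjl | hjl
    · subst hjl
      simp only [if_pos rfl]
      push_cast
      ring
    · simp only [if_neg hjl]
      push_cast
      ring

/-! ### Factorization over independent rows -/

section Pi

variable {r : ℕ} (P : Matrix (Fin r) (Fin r) ℝ) (n : Fin r → ℕ)

lemma pi_single (hP : IsStochastic P) (a : Fin r) (h : (Fin r → ℕ) → ℝ) :
    ∑ ξ ∈ Fintype.piFinset fun i => Finset.Nat.antidiagonalTuple r (n i),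
        (∏ i, multinomialWeight (P i) (ξ i)) * h (ξ a)
      = ∑ x ∈ Finset.Nat.antidiagonalTuple r (n a), multinomialWeight (P a) x * h x := by
  classical
  have key : ∀ ξ : Fin r → (Fin r → ℕ),
      (∏ i, multinomialWeight (P i) (ξ i)) * h (ξ a)
        = ∏ i, (multinomialWeight (P i) (ξ i) * (if i = a then h (ξ i) else 1)) := by
    intro ξ
    rw [Finset.prod_mul_distrib, Finset.prod_ite_eq' Finset.univ a (fun i => h (ξ i))]
    simp
  simp_rw [key]
  rw [← Finset.prod_univ_sum (fun i => Finset.Nat.antidiagonalTuple r (n i))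
    (fun i x => multinomialWeight (P i) x * (if i = a then h x else 1))]
  have hfac : ∀ i, (∑ x ∈ Finset.Nat.antidiagonalTuple r (n i),
      multinomialWeight (P i) x * (if i = a then h x else 1))
      = if i = a then (∑ x ∈ Finset.Nat.antidiagonalTuple r (n a),
          multinomialWeight (P a) x * h x) else 1 := by
    intro i
    rcases eq_or_ne i a with hia | hia
    · subst hia; simp
    · simp only [if_neg hia, mul_one]
      exact sum_weight_one (P i) (hP.2 i) (n i)
  calc ∏ i, (∑ x ∈ Finset.Nat.antidiagonalTuple r (n i),
        multinomialWeight (P i) x * (if i = a then h x else 1))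
      = ∏ i, (if i = a then (∑ x ∈ Finset.Nat.antidiagonalTuple r (n a),
          multinomialWeight (P a) x * h x) else 1) := by
        exact Finset.prod_congr rfl fun i _ => hfac i
    _ = _ := by
        rw [Finset.prod_ite_eq' Finset.univ a
          (fun _ => ∑ x ∈ Finset.Nat.antidiagonalTuple r (n a), multinomialWeight (P a) x * h x)]
        simp

lemma pi_double (hP : IsStochastic P) (a b : Fin r) (hab : a ≠ b) (h h2 : (Fin r → ℕ) → ℝ) :
    ∑ ξ ∈ Fintype.piFinset fun i => Finset.Nat.antidiagonalTuple r (n i),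
        (∏ i, multinomialWeight (P i) (ξ i)) * h (ξ a) * h2 (ξ b)
      = (∑ x ∈ Finset.Nat.antidiagonalTuple r (n a), multinomialWeight (P a) x * h x)
        * (∑ x ∈ Finset.Nat.antidiagonalTuple r (n b), multinomialWeight (P b) x * h2 x) := by
  classical
  have key : ∀ ξ : Fin r → (Fin r → ℕ),
      (∏ i, multinomialWeight (P i) (ξ i)) * h (ξ a) * h2 (ξ b)
        = ∏ i, (multinomialWeight (P i) (ξ i)
            * ((if i = a then h (ξ i) else 1) * (if i = b then h2 (ξ i) else 1))) := by
    intro ξ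
    rw [Finset.prod_mul_distrib, Finset.prod_mul_distrib,
      Finset.prod_ite_eq' Finset.univ a (fun i => h (ξ i)),
      Finset.prod_ite_eq' Finset.univ b (fun i => h2 (ξ i))]
    simp [mul_assoc]
  simp_rw [key]
  rw [← Finset.prod_univ_sum (fun i => Finset.Nat.antidiagonalTuple r (n i))
    (fun i x => multinomialWeight (P i) x * ((if i = a then h x else 1) * (if i = b then h2 x else 1)))]
  have hfac : ∀ i, (∑ x ∈ Finset.Nat.antidiagonalTuple r (n i),
      multinomialWeight (P i) x * ((if i = a then h x else 1) * (if i = b then h2 x else 1)))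
      = (if i = a then (∑ x ∈ Finset.Nat.antidiagonalTuple r (n a),
            multinomialWeight (P a) x * h x) else 1)
        * (if i = b then (∑ x ∈ Finset.Nat.antidiagonalTuple r (n b),
            multinomialWeight (P b) x * h2 x) else 1) := by
    intro i
    rcases eq_or_ne i a with hia | hia
    · subst hia
      simp [hab]
    · rcases eq_or_ne i b with hib | hib
      · subst hib
        simp [hia]
      · simp only [if_neg hia, if_neg hib, mul_one, one_mul]
        rw [sum_weight_one (P i) (hP.2 i) (n i)]
  calc (∏ i, ∑ x ∈ Finset.Nat.antidiagonalTuple r (n i),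
        multinomialWeight (P i) x * ((if i = a then h x else 1) * (if i = b then h2 x else 1)))
      = ∏ i, ((if i = a then (∑ x ∈ Finset.Nat.antidiagonalTuple r (n a),
            multinomialWeight (P a) x * h x) else 1)
          * (if i = b then (∑ x ∈ Finset.Nat.antidiagonalTuple r (n b),
            multinomialWeight (P b) x * h2 x) else 1)) :=
        Finset.prod_congr rfl fun i _ => hfac i
    _ = _ := by
        rw [Finset.prod_mul_distrib,
          Finset.prod_ite_eq' Finset.univ a
            (fun _ => ∑ x ∈ Finset.Nat.antidiagonalTuple r (n a), multinomialWeight (P a) x * h x),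
          Finset.prod_ite_eq' Finset.univ b
            (fun _ => ∑ x ∈ Finset.Nat.antidiagonalTuple r (n b), multinomialWeight (P b) x * h2 x)]
        simp

end Pi

/-! ### Row moments -/

lemma row_lin {r : ℕ} (p : Fin r → ℝ) (hp : ∑ i, p i = 1) (m : ℕ) (w : Fin r → ℝ) :
    ∑ x ∈ Finset.Nat.antidiagonalTuple r m,
        multinomialWeight p x * (∑ j, (x j : ℝ) * w j)
      = (m : ℝ) * ∑ j, p j * w j := by
  have hstep : ∀ x : Fin r → ℕ, multinomialWeight p x * (∑ j, (x j : ℝ) * w j)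
      = ∑ j, multinomialWeight p x * (x j : ℝ) * w j := by
    intro x
    rw [Finset.mul_sum]
    exact Finset.sum_congr rfl fun j _ => by ring
  simp_rw [hstep]
  rw [Finset.sum_comm, Finset.mul_sum]
  refine Finset.sum_congr rfl fun j _ => ?_
  rw [← Finset.sum_mul, sum_weight_mul p hp j m]
  ring

lemma row_sq {r : ℕ} (p : Fin r → ℝ) (hp : ∑ i, p i = 1) (m : ℕ) (v : Fin r → ℝ) :
    ∑ x ∈ Finset.Nat.antidiagonalTuple r m,
        multinomialWeight p x * (∑ j, (x j : ℝ) * v j) ^ 2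
      = (m : ℝ) * ((m : ℝ) - 1) * (∑ j, p j * v j) ^ 2 + (m : ℝ) * ∑ j, p j * (v j) ^ 2 := by
  have hstep : ∀ x : Fin r → ℕ, multinomialWeight p x * (∑ j, (x j : ℝ) * v j) ^ 2
      = ∑ j, ∑ l, multinomialWeight p x * (x j : ℝ) * (x l : ℝ) * (v j * v l) := by
    intro x
    rw [sq, Finset.sum_mul_sum, Finset.mul_sum]
    refine Finset.sum_congr rfl fun j _ => ?_
    rw [Finset.mul_sum]
    exact Finset.sum_congr rfl fun l _ => by ring
  simp_rw [hstep]
  rw [Finset.sum_comm]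
  have hswap : ∀ j : Fin r,
      ∑ x ∈ Finset.Nat.antidiagonalTuple r m,
          ∑ l, multinomialWeight p x * (x j : ℝ) * (x l : ℝ) * (v j * v l)
        = ∑ l, ((m : ℝ) * ((m : ℝ) - 1) * p j * p l
            + (if j = l then (m : ℝ) * p j else 0)) * (v j * v l) := by
    intro j
    rw [Finset.sum_comm]
    refine Finset.sum_congr rfl fun l _ => ?_
    rw [← Finset.sum_mul, sum_weight_mul2 p hp j l m]
  simp_rw [hswap]
  have hexp : ∀ j : Fin r,
      ∑ l, ((m : ℝ) * ((m : ℝ) - 1) * p j * p l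
          + (if j = l then (m : ℝ) * p j else 0)) * (v j * v l)
        = (m : ℝ) * ((m : ℝ) - 1) * (p j * v j) * (∑ l, p l * v l)
          + (m : ℝ) * p j * (v j) ^ 2 := by
    intro j
    have : ∀ l, ((m : ℝ) * ((m : ℝ) - 1) * p j * p l
          + (if j = l then (m : ℝ) * p j else 0)) * (v j * v l)
        = (m : ℝ) * ((m : ℝ) - 1) * (p j * v j) * (p l * v l)
          + (if j = l then (m : ℝ) * p j * (v j * v l) else 0) := by
      intro l
      split <;> ring
    simp_rw [this]
    rw [Finset.sum_add_distrib, ← Finset.mul_sum, Finset.sum_ite_eq Finset.univ j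
      (fun l => (m : ℝ) * p j * (v j * v l))]
    rw [if_pos (Finset.mem_univ j)]
    ring
  simp_rw [hexp]
  rw [Finset.sum_add_distrib, ← Finset.sum_mul, ← Finset.mul_sum]
  have h2 : ∑ x, (m : ℝ) * p x * (v x) ^ 2 = (m : ℝ) * ∑ x, p x * (v x) ^ 2 := by
    rw [Finset.mul_sum]
    exact Finset.sum_congr rfl fun x _ => by ring
  rw [h2]
  ring

/-! ### One step expectation -/

lemma pi_const {r : ℕ} (P : Matrix (Fin r) (Fin r) ℝ) (hP : IsStochastic P) (n : Fin r → ℕ) :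
    ∑ ξ ∈ Fintype.piFinset fun i => Finset.Nat.antidiagonalTuple r (n i),
        ∏ i, multinomialWeight (P i) (ξ i) = 1 := by
  rw [← Finset.prod_univ_sum (fun i => Finset.Nat.antidiagonalTuple r (n i))
    (fun i x => multinomialWeight (P i) x)]
  rw [Finset.prod_congr rfl fun i _ => sum_weight_one (P i) (hP.2 i) (n i)]
  simp

lemma stepE_combined {r : ℕ} (P : Matrix (Fin r) (Fin r) ℝ) (hP : IsStochastic P)
    (v w : Fin r → ℝ) (C : ℝ) (n : Fin r → ℕ) :
    stepE P (fun β => (∑ i, (β i : ℝ) * v i) ^ 2 + ∑ i, (β i : ℝ) * w i + C) n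
      = (∑ i, (n i : ℝ) * (∑ j, P i j * v j)) ^ 2
        + ∑ i, (n i : ℝ) * ((∑ j, P i j * (v j) ^ 2) - (∑ j, P i j * v j) ^ 2
            + (∑ j, P i j * w j))
        + C := by
  classical
  unfold stepE
  set T := Fintype.piFinset fun i => Finset.Nat.antidiagonalTuple r (n i) with hT
  set h : (Fin r → ℕ) → ℝ := fun x => ∑ j, (x j : ℝ) * v j with hh
  set hw : (Fin r → ℕ) → ℝ := fun x => ∑ j, (x j : ℝ) * w j with hhw
  have hcol : ∀ ξ : Fin r → (Fin r → ℕ),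
      ((∑ i, ((∑ a, ξ a i : ℕ) : ℝ) * v i) ^ 2 + ∑ i, ((∑ a, ξ a i : ℕ) : ℝ) * w i + C)
        = (∑ a, h (ξ a)) ^ 2 + (∑ a, hw (ξ a)) + C := by
    intro ξ
    have hv : (∑ i, ((∑ a, ξ a i : ℕ) : ℝ) * v i) = ∑ a, h (ξ a) := by
      rw [Finset.sum_comm (f := fun a i => (ξ a i : ℝ) * v i)]
      push_cast
      refine Finset.sum_congr rfl fun i _ => ?_
      rw [Finset.sum_mul]
    have hwv : (∑ i, ((∑ a, ξ a i : ℕ) : ℝ) * w i) = ∑ a, hw (ξ a) := by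
      rw [Finset.sum_comm (f := fun a i => (ξ a i : ℝ) * w i)]
      push_cast
      refine Finset.sum_congr rfl fun i _ => ?_
      rw [Finset.sum_mul]
    rw [hv, hwv]
  have hsplit : ∀ ξ : Fin r → (Fin r → ℕ),
      (∏ i, multinomialWeight (P i) (ξ i))
          * ((∑ i, ((∑ a, ξ a i : ℕ) : ℝ) * v i) ^ 2 + ∑ i, ((∑ a, ξ a i : ℕ) : ℝ) * w i + C)
        = (∑ a, ∑ b, (∏ i, multinomialWeight (P i) (ξ i)) * h (ξ a) * h (ξ b))
          + (∑ a, (∏ i, multinomialWeight (P i) (ξ i)) * hw (ξ a))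
          + (∏ i, multinomialWeight (P i) (ξ i)) * C := by
    intro ξ
    rw [hcol ξ]
    have e1 : (∑ a, h (ξ a)) ^ 2 = ∑ a, ∑ b, h (ξ a) * h (ξ b) := by
      rw [sq, Finset.sum_mul_sum]
    have e2 : (∏ i, multinomialWeight (P i) (ξ i)) * ∑ a, ∑ b, h (ξ a) * h (ξ b)
        = ∑ a, ∑ b, (∏ i, multinomialWeight (P i) (ξ i)) * h (ξ a) * h (ξ b) := by
      rw [Finset.mul_sum]
      refine Finset.sum_congr rfl fun a _ => ?_
      rw [Finset.mul_sum]
      exact Finset.sum_congr rfl fun b _ => by ring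
    have e3 : (∏ i, multinomialWeight (P i) (ξ i)) * ∑ a, hw (ξ a)
        = ∑ a, (∏ i, multinomialWeight (P i) (ξ i)) * hw (ξ a) := Finset.mul_sum _ _ _
    rw [e1, mul_add, mul_add, e2, e3]
  simp_rw [hsplit]
  rw [Finset.sum_add_distrib, Finset.sum_add_distrib]
  -- constant term
  have hconst : ∑ ξ ∈ T, (∏ i, multinomialWeight (P i) (ξ i)) * C = C := by
    rw [← Finset.sum_mul, pi_const P hP n, one_mul]
  -- linear term
  have hlin : ∑ ξ ∈ T, ∑ a, (∏ i, multinomialWeight (P i) (ξ i)) * hw (ξ a)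
      = ∑ a, (n a : ℝ) * ∑ j, P a j * w j := by
    rw [Finset.sum_comm]
    refine Finset.sum_congr rfl fun a _ => ?_
    rw [pi_single P n hP a hw]
    exact row_lin (P a) (hP.2 a) (n a) w
  -- quadratic term
  have hS : ∀ a, ∑ x ∈ Finset.Nat.antidiagonalTuple r (n a),
      multinomialWeight (P a) x * h x = (n a : ℝ) * ∑ j, P a j * v j := fun a =>
    row_lin (P a) (hP.2 a) (n a) v
  have hQ : ∀ a, ∑ x ∈ Finset.Nat.antidiagonalTuple r (n a),
      multinomialWeight (P a) x * (h x) ^ 2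
      = (n a : ℝ) * ((n a : ℝ) - 1) * (∑ j, P a j * v j) ^ 2
        + (n a : ℝ) * ∑ j, P a j * (v j) ^ 2 := fun a =>
    row_sq (P a) (hP.2 a) (n a) v
  have hsq : ∑ ξ ∈ T, ∑ a, ∑ b, (∏ i, multinomialWeight (P i) (ξ i)) * h (ξ a) * h (ξ b)
      = (∑ a, (n a : ℝ) * ∑ j, P a j * v j) ^ 2
        + ∑ a, ((n a : ℝ) * (∑ j, P a j * (v j) ^ 2)
            - (n a : ℝ) * (∑ j, P a j * v j) ^ 2) := by
    rw [Finset.sum_comm]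
    have hab : ∀ a, ∑ ξ ∈ T, ∑ b, (∏ i, multinomialWeight (P i) (ξ i)) * h (ξ a) * h (ξ b)
        = ∑ b, ((n a : ℝ) * ∑ j, P a j * v j) * ((n b : ℝ) * ∑ j, P b j * v j)
            + ((n a : ℝ) * (∑ j, P a j * (v j) ^ 2)
              - (n a : ℝ) * (∑ j, P a j * v j) ^ 2) := by
      intro a
      rw [Finset.sum_comm]
      have hterm : ∀ b, ∑ ξ ∈ T, (∏ i, multinomialWeight (P i) (ξ i)) * h (ξ a) * h (ξ b)
          = ((n a : ℝ) * ∑ j, P a j * v j) * ((n b : ℝ) * ∑ j, P b j * v j)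
            + (if a = b then ((n a : ℝ) * (∑ j, P a j * (v j) ^ 2)
                - (n a : ℝ) * (∑ j, P a j * v j) ^ 2) else 0) := by
        intro b
        rcases eq_or_ne a b with hab' | hab'
        · subst hab'
          have : ∀ ξ : Fin r → (Fin r → ℕ),
              (∏ i, multinomialWeight (P i) (ξ i)) * h (ξ a) * h (ξ a)
                = (∏ i, multinomialWeight (P i) (ξ i)) * (fun x => (h x) ^ 2) (ξ a) := by
            intro ξ; simp; ring
          rw [Finset.sum_congr rfl fun ξ _ => this ξ, pi_single P n hP a (fun x => (h x) ^ 2),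
            hQ a]
          rw [if_pos rfl]
          ring
        · rw [pi_double P n hP a b hab' h h, hS a, hS b]
          simp only [if_neg hab']
          ring
      rw [Finset.sum_congr rfl fun b _ => hterm b, Finset.sum_add_distrib,
        Finset.sum_ite_eq Finset.univ a
          (fun b => ((n a : ℝ) * (∑ j, P a j * (v j) ^ 2)
            - (n a : ℝ) * (∑ j, P a j * v j) ^ 2))]
      simp
    rw [Finset.sum_congr rfl fun a _ => hab a, Finset.sum_add_distrib]
    congr 1
    rw [← Finset.sum_mul_sum]
    exact (sq _).symm
  rw [hconst, hlin, hsq]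
  have hcomb : ∑ a, (n a : ℝ) * ((∑ j, P a j * (v j) ^ 2) - (∑ j, P a j * v j) ^ 2
        + (∑ j, P a j * w j))
      = (∑ a, ((n a : ℝ) * (∑ j, P a j * (v j) ^ 2)
          - (n a : ℝ) * (∑ j, P a j * v j) ^ 2))
        + ∑ a, (n a : ℝ) * ∑ j, P a j * w j := by
    rw [← Finset.sum_add_distrib]
    exact Finset.sum_congr rfl fun a _ => by ring
  rw [hcomb]
  ring

/-! ### Chain expectation -/

lemma chain_combined {r : ℕ} (P : ℕ → Matrix (Fin r) (Fin r) ℝ)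
    (hst : ∀ k, IsStochastic (P k)) :
    ∀ (k m : ℕ) (v w : Fin r → ℝ) (C : ℝ) (n : Fin r → ℕ),
    chainE P m k (fun β => (∑ i, (β i : ℝ) * v i) ^ 2
        + ∑ i, (β i : ℝ) * (v i - (v i) ^ 2 + w i) + C) n
      = (∑ i, (n i : ℝ) * (((List.range k).map fun l => P (m + l)).prod.mulVec v) i) ^ 2
        + ∑ i, (n i : ℝ) * ((((List.range k).map fun l => P (m + l)).prod.mulVec v) i
            - ((((List.range k).map fun l => P (m + l)).prod.mulVec v) i) ^ 2
            + (((List.range k).map fun l => P (m + l)).prod.mulVec w) i) + C := by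
  intro k
  induction k with
  | zero =>
    intro m v w C n
    simp [chainE, Matrix.one_mulVec]
  | succ k ih =>
    intro m v w C n
    have hlist : (((List.range (k+1)).map fun l => P (m + l)).prod
        = P m * (((List.range k).map fun l => P (m + 1 + l)).prod)) := by
      have hfg : ((fun l => P (m + l)) ∘ Nat.succ) = fun l => P (m + 1 + l) := by
        funext l
        have harg : m + Nat.succ l = m + 1 + l := by omega
        rw [Function.comp_apply, harg]
      rw [List.range_succ_eq_map, List.map_cons, List.prod_cons, List.map_map, hfg, Nat.add_zero]
    set M := ((List.range k).map fun l => P (m + 1 + l)).prod with hM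
    have hstep : chainE P m (k+1) (fun β => (∑ i, (β i : ℝ) * v i) ^ 2
        + ∑ i, (β i : ℝ) * (v i - (v i) ^ 2 + w i) + C) n
        = stepE (P m) (chainE P (m+1) k (fun β => (∑ i, (β i : ℝ) * v i) ^ 2
            + ∑ i, (β i : ℝ) * (v i - (v i) ^ 2 + w i) + C)) n := rfl
    rw [hstep]
    have hinner : chainE P (m+1) k (fun β => (∑ i, (β i : ℝ) * v i) ^ 2
        + ∑ i, (β i : ℝ) * (v i - (v i) ^ 2 + w i) + C)
        = fun n' => (∑ i, (n' i : ℝ) * (M.mulVec v) i) ^ 2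
          + ∑ i, (n' i : ℝ) * ((M.mulVec v) i - ((M.mulVec v) i) ^ 2 + (M.mulVec w) i) + C :=
      funext fun n' => ih (m+1) v w C n'
    rw [hinner]
    rw [stepE_combined (P m) (hst m) (M.mulVec v)
      (fun i => (M.mulVec v) i - ((M.mulVec v) i) ^ 2 + (M.mulVec w) i) C n]
    have hVfull : ∀ x : Fin r → ℝ,
        (((List.range (k+1)).map fun l => P (m + l)).prod).mulVec x
          = (P m).mulVec (M.mulVec x) := by
      intro x
      rw [hlist, ← Matrix.mulVec_mulVec]
    have hPm : ∀ (x : Fin r → ℝ) (a : Fin r), ((P m).mulVec x) a = ∑ j', P m a j' * x j' := by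
      intro x a
      simp [Matrix.mulVec, dotProduct]
    rw [hVfull v, hVfull w]
    have h1 : ∑ i, (n i : ℝ) * (∑ j', P m i j' * (M.mulVec v) j')
        = ∑ i, (n i : ℝ) * ((P m).mulVec (M.mulVec v)) i :=
      Finset.sum_congr rfl fun i _ => by rw [hPm]
    have h2 : ∑ i, (n i : ℝ) * ((∑ j', P m i j' * ((M.mulVec v) j') ^ 2)
          - (∑ j', P m i j' * (M.mulVec v) j') ^ 2
          + (∑ j', P m i j' * ((M.mulVec v) j' - ((M.mulVec v) j') ^ 2 + (M.mulVec w) j')))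
        = ∑ i, (n i : ℝ) * (((P m).mulVec (M.mulVec v)) i
          - (((P m).mulVec (M.mulVec v)) i) ^ 2 + ((P m).mulVec (M.mulVec w)) i) := by
      refine Finset.sum_congr rfl fun i _ => ?_
      have hsp : ∑ j', P m i j' * ((M.mulVec v) j' - ((M.mulVec v) j') ^ 2 + (M.mulVec w) j')
          = (∑ j', P m i j' * (M.mulVec v) j')
            - (∑ j', P m i j' * ((M.mulVec v) j') ^ 2)
            + (∑ j', P m i j' * (M.mulVec w) j') := by
        rw [← Finset.sum_sub_distrib, ← Finset.sum_add_distrib]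
        exact Finset.sum_congr rfl fun j' _ => by ring
      rw [hsp, hPm (M.mulVec v) i, hPm (M.mulVec w) i]
      ring
    rw [h1, h2]

/-- `E[(n_j(m+k) − n_j(m))² | n(m) = n] = (n·c)² + n·c − ∑ᵢ cᵢ² nᵢ − 2(n·c)n_j + n_j²`,
where `c` is the `j`-th column of `P_{N,m} ⋯ P_{N,m+k-1}`. -/
theorem conditional_second_moment_identity (r N : ℕ) (hr : 2 ≤ r) (hN : 1 ≤ N)
    (A : ℝ → Matrix (Fin r) (Fin r) ℝ)
    (hQ : ∀ t : ℝ, 0 ≤ t → IsQMatrix (A t))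
    (hstepwise : ∀ k : ℕ, ∀ t : ℝ, (k : ℝ) / N ≤ t → t < ((k : ℝ) + 1) / N → A t = A ((k : ℝ) / N))
    (P : ℕ → Matrix (Fin r) (Fin r) ℝ)
    (hP : ∀ k : ℕ, P k = 1 + ((N : ℝ))⁻¹ • A ((k : ℝ) / N))
    (hstoch : ∀ k : ℕ, IsStochastic (P k))
    (m k : ℕ) (hk : 1 ≤ k)
    (j : Fin r)
    (n : Fin r → ℕ) (hn : ∑ i, n i = N)
    (c : Fin r → ℝ)
    (hc : c = ((List.range k).map fun l => P (m + l)).prod.mulVec (Pi.single j 1)) :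
    chainE P m k (fun β => ((β j : ℝ) - (n j : ℝ)) ^ 2) n
      = (∑ i, (n i : ℝ) * c i) ^ 2 + (∑ i, (n i : ℝ) * c i)
        - (∑ i, (c i) ^ 2 * (n i : ℝ))
        - 2 * (∑ i, (n i : ℝ) * c i) * (n j : ℝ) + (n j : ℝ) ^ 2 := by
  classical
  set v : Fin r → ℝ := fun i => if i = j then 1 else 0 with hv
  set w : Fin r → ℝ := fun i => if i = j then (-2) * (n j : ℝ) else 0 with hwdef
  have hfun : (fun β : Fin r → ℕ => ((β j : ℝ) - (n j : ℝ)) ^ 2)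
      = fun β : Fin r → ℕ => (∑ i, (β i : ℝ) * v i) ^ 2
          + ∑ i, (β i : ℝ) * (v i - (v i) ^ 2 + w i) + ((n j : ℝ)) ^ 2 := by
    funext β
    have h1 : ∑ i, (β i : ℝ) * v i = (β j : ℝ) := by
      rw [hv]
      have : ∀ i, (β i : ℝ) * (if i = j then (1 : ℝ) else 0)
          = if i = j then (β i : ℝ) else 0 := by
        intro i; split <;> ring
      rw [Finset.sum_congr rfl fun i _ => this i,
        Finset.sum_ite_eq' Finset.univ j (fun i => (β i : ℝ))]
      simp
    have h2 : ∑ i, (β i : ℝ) * (v i - (v i) ^ 2 + w i) = -2 * (n j : ℝ) * (β j : ℝ) := by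
      have : ∀ i, (β i : ℝ) * (v i - (v i) ^ 2 + w i)
          = if i = j then -2 * (n j : ℝ) * (β i : ℝ) else 0 := by
        intro i
        rw [hv, hwdef]
        dsimp only
        split <;> ring
      rw [Finset.sum_congr rfl fun i _ => this i,
        Finset.sum_ite_eq' Finset.univ j (fun i => -2 * (n j : ℝ) * (β i : ℝ))]
      simp
    rw [h1, h2]
    ring
  rw [hfun, chain_combined P hstoch k m v w ((n j : ℝ) ^ 2) n]
  have hvs : v = Pi.single j 1 := by
    funext i
    rw [hv, Pi.single_apply]
  have hveq : (((List.range k).map fun l => P (m + l)).prod.mulVec v) = c := by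
    rw [hvs, hc]
  have hws : w = (-2 * (n j : ℝ)) • (Pi.single j 1 : Fin r → ℝ) := by
    funext i
    rw [hwdef, Pi.smul_apply, Pi.single_apply]
    dsimp only
    split <;> simp
  have hweq : (((List.range k).map fun l => P (m + l)).prod.mulVec w)
      = fun i => -2 * (n j : ℝ) * c i := by
    rw [hws, Matrix.mulVec_smul, ← hvs, hveq]
    funext i
    simp
  rw [hveq, hweq]
  have hsum : ∑ i, (n i : ℝ) * (c i - (c i) ^ 2 + (-2 * (n j : ℝ) * c i))
      = (∑ i, (n i : ℝ) * c i) - (∑ i, (c i) ^ 2 * (n i : ℝ))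
        - 2 * (n j : ℝ) * ∑ i, (n i : ℝ) * c i := by
    have : ∀ i, (n i : ℝ) * (c i - (c i) ^ 2 + (-2 * (n j : ℝ) * c i))
        = ((n i : ℝ) * c i - (c i) ^ 2 * (n i : ℝ)) - 2 * (n j : ℝ) * ((n i : ℝ) * c i) := by
      intro i; ring
    rw [Finset.sum_congr rfl fun i _ => this i, Finset.sum_sub_distrib,
      Finset.sum_sub_distrib, ← Finset.mul_sum]
  rw [hsum]
  ring
end
end

section
/- Assume lim_{N→∞} d_U(A_N, A) = 0. Then for every function f : ℝ^r → ℝ of class C² and every T > 0, both sup_{N ≥ 1} sup_{0 ≤ t ≤ T} sup_{p ∈ K_N} | N·(S_{N,[Nt]} f(p) − f(p)) | < ∞ and lim_{N→∞} sup_{0 ≤ t ≤ T} sup_{p ∈ K_N} | S_{N,[Nt]} f(p) − f(p) | = 0 hold. -/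
open scoped BigOperators NNReal
open Finset MeasureTheory

noncomputable section

/-- Frobenius norm of an `r×r` real matrix. -/
def frobNorm {r : ℕ} (M : Matrix (Fin r) (Fin r) ℝ) : ℝ :=
  Real.sqrt (∑ i, ∑ j, (M i j) ^ 2)

/-- The metric `d_U(x,y) = ∫₀^∞ e^{-u} sup_{0≤t≤u} (‖x(t)−y(t)‖ ∧ 1) du` on
matrix-valued paths. -/
def dU {r : ℕ} (x y : ℝ → Matrix (Fin r) (Fin r) ℝ) : ℝ :=
  ∫ u in Set.Ioi (0 : ℝ),
    Real.exp (-u) * sSup ((fun t => min (frobNorm (x t - y t)) 1) '' Set.Icc 0 u)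

/-- The internal-dynamics transition operator: `SOp N P f n = S_{N} f(n/N)`, where each
of the `n i` agents of type `i` independently moves to type `j` with probability `P i j`,
the sum running over all arrays `ξ ∈ ℤ₊^{r×r}` whose `i`-th row sums to `n i`. -/
def SOp {r : ℕ} (N : ℕ) (P : Matrix (Fin r) (Fin r) ℝ) (f : (Fin r → ℝ) → ℝ)
    (n : Fin r → ℕ) : ℝ :=
  ∑ ξ ∈ Fintype.piFinset fun i => Finset.Nat.antidiagonalTuple r (n i),
    (∏ i, multinomialWeight (P i) (ξ i)) * f fun j => ((∑ i, ξ i j : ℕ) : ℝ) / N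

/-- The multinomial-sampling operator `T_N f(p) = E[f(M/N)]`, `M ~ multinomial(N,p)`. -/
def TOp {r : ℕ} (N : ℕ) (f : (Fin r → ℝ) → ℝ) (p : Fin r → ℝ) : ℝ :=
  ∑ α ∈ Finset.Nat.antidiagonalTuple r N,
    multinomialWeight p α * f fun i => (α i : ℝ) / N

/-- One-step operator of internal dynamics followed by multinomial sampling:
`U_{N,k} f = S_{N,k}(T_N f)`. -/
def UOp {r : ℕ} (N : ℕ) (P : Matrix (Fin r) (Fin r) ℝ) (f : (Fin r → ℝ) → ℝ)
    (n : Fin r → ℕ) : ℝ :=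
  SOp N P (TOp N f) n

/-- The first-order generator `G_A(t) f(p) = ∑_{i,j} pᵢ aᵢⱼ(t) ∂f/∂xⱼ(p)`,
here taking the matrix `A(t)` as argument. -/
def GA {r : ℕ} (M : Matrix (Fin r) (Fin r) ℝ) (f : (Fin r → ℝ) → ℝ) (p : Fin r → ℝ) : ℝ :=
  ∑ i, ∑ j, p i * M i j * fderiv ℝ f p (Pi.single j 1)

/-- The Wright–Fisher generator
`G_B f(p) = (1/2) ∑_{i,j} pᵢ(δᵢⱼ − pⱼ) ∂²f/∂xᵢ∂xⱼ(p)`. -/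
def GB {r : ℕ} (f : (Fin r → ℝ) → ℝ) (p : Fin r → ℝ) : ℝ :=
  (1 / 2) * ∑ i, ∑ j,
    p i * ((if i = j then (1 : ℝ) else 0) - p j) *
      fderiv ℝ (fun x => fderiv ℝ f x (Pi.single j 1)) p (Pi.single i 1)


/-!
Under `S_{N,k}` an agent of type `i` leaves its type with probability
`1 - P_{ii} = -a_{N,i,i}(k/N) / N`, and each agent that changes type moves the empirical
frequencies `n/N` by at most `1/N` in every coordinate. As `f` is Lipschitz on the unit cube,
`|S_{N,k} f(n/N) - f(n/N)|` is at most `L/N` times the expected number of such agents, i.e.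
`≤ L/N² · ∑ᵢ nᵢ |a_{N,i,i}(k/N)| ≤ L C / N` once the entries of `A_N` are bounded by `C` on
`[0,T]` uniformly in `N`. That uniform bound comes from `d_U(A_N, A) → 0`: beyond some `M`, the
entries of `A_N` stay within `1` of those of `A_M` on `[0,T]`, and stochasticity of `I + A_N/N`
bounds the entries of each single `A_N` by `N`.
-/

open Filter Topology

section Multinomial

variable {ι : Type*} [Fintype ι] [DecidableEq ι]

theorem succ_mul_multinomial_add_single (γ : ι → ℕ) (j : ι) :
    (γ j + 1) * Nat.multinomial univ (γ + Pi.single j 1) =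
      (∑ i, γ i + 1) * Nat.multinomial univ γ := by
  have hins : (univ : Finset ι) = insert j (univ.erase j) := (insert_erase (mem_univ j)).symm
  have hoff : ∀ i ∈ univ.erase j, (γ + Pi.single j 1 : ι → ℕ) i = γ i := fun i hi => by
    simp [ne_of_mem_erase hi]
  rw [hins, Nat.multinomial_insert (notMem_erase j _), Nat.multinomial_insert (notMem_erase j _),
    Nat.multinomial_congr hoff, sum_congr rfl hoff, sum_insert (notMem_erase j _)]
  simp only [Pi.add_apply, Pi.single_eq_same]
  rw [show γ j + 1 + ∑ i ∈ univ.erase j, γ i = γ j + ∑ i ∈ univ.erase j, γ i + 1 by ring,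
    ← mul_assoc, ← mul_assoc, mul_comm (γ j + 1), ← Nat.add_one_mul_choose_eq]

end Multinomial

section MultinomialWeight

variable {r : ℕ}

theorem multinomialWeight_nonneg {p : Fin r → ℝ} (hp : 0 ≤ p) (β : Fin r → ℕ) :
    0 ≤ multinomialWeight p β :=
  mul_nonneg (Nat.cast_nonneg _) (prod_nonneg fun j _ => pow_nonneg (hp j) _)

theorem sum_multinomialWeight (p : Fin r → ℝ) (m : ℕ) :
    ∑ β ∈ Nat.antidiagonalTuple r m, multinomialWeight p β = (∑ j, p j) ^ m := by
  rw [← piAntidiag_univ_fin_eq_antidiagonalTuple, sum_pow_eq_sum_piAntidiag]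
  rfl

theorem add_one_mul_multinomialWeight_add_single (p : Fin r → ℝ) (γ : Fin r → ℕ) (j : Fin r) :
    (γ j + 1) * multinomialWeight p (γ + Pi.single j 1) =
      (∑ i, γ i + 1) * p j * multinomialWeight p γ := by
  have hprod : ∏ i, p i ^ (γ + Pi.single j 1 : Fin r → ℕ) i = p j * ∏ i, p i ^ γ i := by
    have hsingle : ∏ i, p i ^ (Pi.single j 1 : Fin r → ℕ) i = p j := by
      rw [Fintype.prod_eq_single j fun i hi => by simp [hi]]
      simp
    simp only [Pi.add_apply, pow_add, prod_mul_distrib, hsingle, mul_comm]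
  have hmult := congrArg (Nat.cast : ℕ → ℝ) (succ_mul_multinomial_add_single γ j)
  push_cast at hmult
  rw [multinomialWeight, multinomialWeight, hprod, ← mul_assoc, hmult]
  push_cast
  ring

theorem sum_multinomialWeight_mul_apply {p : Fin r → ℝ} (hp : ∑ j, p j = 1) (m : ℕ) (j : Fin r) :
    ∑ β ∈ Nat.antidiagonalTuple r m, multinomialWeight p β * β j = m * p j := by
  cases m with
  | zero => simp [Nat.antidiagonalTuple_zero_right]
  | succ m =>
    -- only `β` with `β j ≠ 0` contribute, and these are exactly the `γ + Pi.single j 1`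
    have hshift : ∑ β ∈ Nat.antidiagonalTuple r (m + 1), multinomialWeight p β * β j =
        ∑ γ ∈ Nat.antidiagonalTuple r m, multinomialWeight p (γ + Pi.single j 1) * (γ j + 1) := by
      symm
      refine sum_of_injOn (· + Pi.single j 1) (fun _ _ _ _ h => add_right_cancel h) ?_ ?_ ?_
      · intro γ hγ
        simp_all [Nat.mem_antidiagonalTuple, sum_add_distrib]
      · intro β hβm hβ
        suffices β j = 0 by simp [this]
        by_contra hβj
        obtain ⟨γ, rfl⟩ : ∃ γ, β = γ + Pi.single j 1 := ⟨β - Pi.single j 1, by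
          ext i
          by_cases hi : i = j
          · subst hi
            simp only [Pi.add_apply, Pi.sub_apply, Pi.single_eq_same]
            omega
          · simp [hi]⟩
        refine hβ ⟨γ, ?_, rfl⟩
        simpa [Nat.mem_antidiagonalTuple, sum_add_distrib] using hβm
      · intro γ _
        simp
    have hterm : ∀ γ ∈ Nat.antidiagonalTuple r m,
        multinomialWeight p (γ + Pi.single j 1) * (γ j + 1) =
          (m + 1) * p j * multinomialWeight p γ := by
      intro γ hγ
      rw [mul_comm, add_one_mul_multinomialWeight_add_single, ← (Nat.mem_antidiagonalTuple.mp hγ)]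
    rw [hshift, sum_congr rfl hterm, ← mul_sum, sum_multinomialWeight, hp]
    push_cast
    ring

end MultinomialWeight

section Movers

variable {ι : Type*} [Fintype ι] [DecidableEq ι]

def numMovers (ξ : ι → ι → ℕ) : ℕ :=
  ∑ i, ∑ j ∈ univ.erase i, ξ i j

theorem abs_sum_apply_sub_sum_le_numMovers (ξ : ι → ι → ℕ) (j : ι) :
    |((∑ i, ξ i j : ℕ) : ℝ) - ((∑ k, ξ j k : ℕ) : ℝ)| ≤ numMovers ξ := by
  have hin : ∑ i ∈ univ.erase j, ξ i j ≤ numMovers ξ :=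
    (sum_le_sum fun i hi => single_le_sum (fun _ _ => Nat.zero_le _)
      (mem_erase.mpr ⟨(ne_of_mem_erase hi).symm, mem_univ j⟩)).trans
      (sum_le_sum_of_subset (erase_subset j univ))
  have hout : ∑ k ∈ univ.erase j, ξ j k ≤ numMovers ξ :=
    single_le_sum (f := fun i => ∑ k ∈ univ.erase i, ξ i k) (fun _ _ => Nat.zero_le _) (mem_univ j)
  rw [← add_sum_erase _ _ (mem_univ j), ← add_sum_erase _ (ξ j) (mem_univ j)]
  push_cast
  rw [add_sub_add_left_eq_sub]
  exact abs_sub_le_of_nonneg_of_le (by positivity) (by exact_mod_cast hin) (by positivity)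
    (by exact_mod_cast hout)

end Movers

section InternalDynamics

variable {r : ℕ}

theorem sum_prod_multinomialWeight {P : Matrix (Fin r) (Fin r) ℝ} (hP : IsStochastic P)
    (n : Fin r → ℕ) :
    ∑ ξ ∈ Fintype.piFinset (fun i => Nat.antidiagonalTuple r (n i)),
      ∏ i, multinomialWeight (P i) (ξ i) = 1 := by
  rw [← prod_univ_sum]
  exact prod_eq_one fun i _ => by rw [sum_multinomialWeight, hP.2 i, one_pow]

theorem sum_prod_multinomialWeight_mul_apply {P : Matrix (Fin r) (Fin r) ℝ} (hP : IsStochastic P)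
    (n : Fin r → ℕ) (i₀ j : Fin r) :
    ∑ ξ ∈ Fintype.piFinset (fun i => Nat.antidiagonalTuple r (n i)),
      (∏ i, multinomialWeight (P i) (ξ i)) * ξ i₀ j = n i₀ * P i₀ j := by
  let g : Fin r → (Fin r → ℕ) → ℝ := fun i β =>
    multinomialWeight (P i) β * if i = i₀ then (β j : ℝ) else 1
  have hg : ∀ i, ∑ β ∈ Nat.antidiagonalTuple r (n i), g i β =
      if i = i₀ then n i₀ * P i₀ j else 1 := by
    intro i
    split_ifs with hi
    · subst hi
      simpa [g] using sum_multinomialWeight_mul_apply (hP.2 i) (n i) j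
    · simp [g, hi, sum_multinomialWeight, hP.2 i]
  calc _ = ∑ ξ ∈ Fintype.piFinset (fun i => Nat.antidiagonalTuple r (n i)), ∏ i, g i (ξ i) := by
        simp only [g, prod_mul_distrib, prod_ite_eq', mem_univ, if_true]
    _ = n i₀ * P i₀ j := by simp [← prod_univ_sum, hg]

theorem sum_prod_multinomialWeight_mul_numMovers {P : Matrix (Fin r) (Fin r) ℝ}
    (hP : IsStochastic P) (n : Fin r → ℕ) :
    ∑ ξ ∈ Fintype.piFinset (fun i => Nat.antidiagonalTuple r (n i)),
      (∏ i, multinomialWeight (P i) (ξ i)) * numMovers ξ =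
        ∑ i, n i * ∑ j ∈ univ.erase i, P i j := by
  simp only [numMovers, Nat.cast_sum, mul_sum]
  rw [sum_comm]
  refine sum_congr rfl fun i _ => ?_
  rw [sum_comm]
  exact sum_congr rfl fun j _ => sum_prod_multinomialWeight_mul_apply hP n i j

theorem frequencies_mem_Icc {ι : Type*} [Fintype ι] {v : ι → ℕ} {N : ℕ} (hv : ∑ i, v i = N) :
    (fun i => (v i : ℝ) / N) ∈ Set.Icc (0 : ι → ℝ) 1 := by
  simp only [Set.mem_Icc, Pi.le_def, Pi.zero_apply, Pi.one_apply]
  refine ⟨fun i => by positivity, fun i => div_le_one_of_le₀ ?_ (Nat.cast_nonneg N)⟩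
  exact_mod_cast hv ▸ single_le_sum (fun _ _ => Nat.zero_le _) (mem_univ i)

theorem abs_SOp_sub_le {P : Matrix (Fin r) (Fin r) ℝ} (hP : IsStochastic P)
    {f : (Fin r → ℝ) → ℝ} {L : ℝ≥0} (hf : LipschitzOnWith L f (Set.Icc 0 1))
    {N : ℕ} {n : Fin r → ℕ} (hn : ∑ i, n i = N) :
    |SOp N P f n - f (fun i => (n i : ℝ) / N)| ≤
      L / N * ∑ i, n i * ∑ j ∈ univ.erase i, P i j := by
  set Ξ := Fintype.piFinset fun i => Nat.antidiagonalTuple r (n i)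
  set W : (Fin r → Fin r → ℕ) → ℝ := fun ξ => ∏ i, multinomialWeight (P i) (ξ i)
  set X : (Fin r → Fin r → ℕ) → Fin r → ℝ := fun ξ j => ((∑ i, ξ i j : ℕ) : ℝ) / N
  set p : Fin r → ℝ := fun i => (n i : ℝ) / N
  have hW : ∀ ξ, 0 ≤ W ξ := fun ξ =>
    prod_nonneg fun i _ => multinomialWeight_nonneg (fun j => hP.1 i j) (ξ i)
  have hstep : ∀ ξ ∈ Ξ, |f (X ξ) - f p| ≤ L / N * numMovers ξ := by
    intro ξ hξ
    have hrow : ∀ i, ∑ k, ξ i k = n i := fun i =>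
      Nat.mem_antidiagonalTuple.mp (Fintype.mem_piFinset.mp hξ i)
    have hX : X ξ ∈ Set.Icc 0 1 := frequencies_mem_Icc (by rw [sum_comm]; simp [hrow, hn])
    have hdist : dist (X ξ) p ≤ numMovers ξ / N := by
      refine (dist_pi_le_iff (by positivity)).mpr fun j => ?_
      rw [Real.dist_eq, ← sub_div, abs_div, Nat.abs_cast, ← hrow j]
      exact div_le_div_of_nonneg_right (abs_sum_apply_sub_sum_le_numMovers ξ j) (Nat.cast_nonneg N)
    calc |f (X ξ) - f p| = dist (f (X ξ)) (f p) := (Real.dist_eq _ _).symm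
      _ ≤ L * dist (X ξ) p := hf.dist_le_mul _ hX _ (frequencies_mem_Icc hn)
      _ ≤ L * (numMovers ξ / N) := by gcongr
      _ = L / N * numMovers ξ := by ring
  have hdiff : SOp N P f n - f p = ∑ ξ ∈ Ξ, W ξ * (f (X ξ) - f p) := by
    have hW1 : ∑ ξ ∈ Ξ, W ξ = 1 := sum_prod_multinomialWeight hP n
    simp only [mul_sub, sum_sub_distrib, ← sum_mul, hW1, one_mul]
    rfl
  calc |SOp N P f n - f p| ≤ ∑ ξ ∈ Ξ, W ξ * |f (X ξ) - f p| := by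
        rw [hdiff]
        refine (abs_sum_le_sum_abs _ _).trans_eq (sum_congr rfl fun ξ _ => ?_)
        rw [abs_mul, abs_of_nonneg (hW ξ)]
    _ ≤ ∑ ξ ∈ Ξ, W ξ * (L / N * numMovers ξ) :=
        sum_le_sum fun ξ hξ => mul_le_mul_of_nonneg_left (hstep ξ hξ) (hW ξ)
    _ = L / N * ∑ i, n i * ∑ j ∈ univ.erase i, P i j := by
        rw [← sum_prod_multinomialWeight_mul_numMovers hP n, mul_sum]
        exact sum_congr rfl fun ξ _ => by ring

end InternalDynamics

section Generator

variable {r : ℕ}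

theorem one_add_inv_smul_apply (B : Matrix (Fin r) (Fin r) ℝ) (c : ℝ) (i j : Fin r) :
    (1 + c⁻¹ • B) i j = (if i = j then 1 else 0) + B i j / c := by
  simp [Matrix.one_apply, div_eq_inv_mul]

theorem abs_apply_le_of_isStochastic_one_add_inv_smul {B : Matrix (Fin r) (Fin r) ℝ} {c : ℝ}
    (hc : 0 < c) (hP : IsStochastic (1 + c⁻¹ • B)) (i j : Fin r) : |B i j| ≤ c := by
  have hle : (1 + c⁻¹ • B) i j ≤ 1 :=
    hP.2 i ▸ single_le_sum (fun k _ => hP.1 i k) (mem_univ j)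
  have hPij := hP.1 i j
  rw [one_add_inv_smul_apply] at hle hPij
  have habs : |B i j / c| ≤ 1 := by
    rw [abs_le]
    constructor <;> split_ifs at hle hPij <;> linarith
  rwa [abs_div, abs_of_pos hc, div_le_one hc] at habs

theorem sum_erase_one_add_inv_smul_apply_le {B : Matrix (Fin r) (Fin r) ℝ} {c C : ℝ} {i : Fin r}
    (hc : 0 < c) (hP : IsStochastic (1 + c⁻¹ • B)) (hC : -C ≤ B i i) :
    ∑ j ∈ univ.erase i, (1 + c⁻¹ • B) i j ≤ C / c := by
  rw [sum_erase_eq_sub (mem_univ i), hP.2 i, one_add_inv_smul_apply, if_pos rfl]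
  rw [sub_add_cancel_left, ← neg_div]
  exact div_le_div_of_nonneg_right (neg_le.mp hC) hc.le

theorem abs_SOp_one_add_inv_smul_sub_le {B : Matrix (Fin r) (Fin r) ℝ} {N : ℕ} (hN : 0 < N)
    (hP : IsStochastic (1 + (N : ℝ)⁻¹ • B)) {C : ℝ} (hC : ∀ i, -C ≤ B i i)
    {f : (Fin r → ℝ) → ℝ} {L : ℝ≥0} (hf : LipschitzOnWith L f (Set.Icc 0 1))
    {n : Fin r → ℕ} (hn : ∑ i, n i = N) :
    |SOp N (1 + (N : ℝ)⁻¹ • B) f n - f (fun i => (n i : ℝ) / N)| ≤ L * C / N := by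
  have hNpos : (0 : ℝ) < N := by exact_mod_cast hN
  calc _ ≤ L / N * ∑ i, n i * ∑ j ∈ univ.erase i, (1 + (N : ℝ)⁻¹ • B) i j := abs_SOp_sub_le hP hf hn
    _ ≤ L / N * ∑ i, n i * (C / N) := by
        gcongr with i
        exact sum_erase_one_add_inv_smul_apply_le hNpos hP (hC i)
    _ = L * C / N := by
        rw [← sum_mul, ← Nat.cast_sum, hn]
        field_simp

end Generator

section PathMetric

theorem exp_neg_mul_le_integral_Ioi_zero {g : ℝ → ℝ} (hmono : Monotone g) (hg0 : 0 ≤ g) {B : ℝ}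
    (hgB : ∀ u, g u ≤ B) {T : ℝ} (hT : 0 ≤ T) :
    Real.exp (-T) * g T ≤ ∫ u in Set.Ioi 0, Real.exp (-u) * g u := by
  have hint : ∀ a, IntegrableOn (fun u => Real.exp (-u) * g u) (Set.Ioi a) := fun a =>
    ((integrableOn_exp_neg_Ioi a).mul_const B).mono'
      ((by fun_prop : Measurable fun u => Real.exp (-u)).mul hmono.measurable).aestronglyMeasurable
      (ae_of_all _ fun u => by
        rw [Real.norm_eq_abs, abs_of_nonneg (mul_nonneg (Real.exp_pos _).le (hg0 u))]
        exact mul_le_mul_of_nonneg_left (hgB u) (Real.exp_pos _).le)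
  calc Real.exp (-T) * g T = ∫ u in Set.Ioi T, Real.exp (-u) * g T := by
        rw [integral_mul_const, integral_exp_neg_Ioi]
    _ ≤ ∫ u in Set.Ioi T, Real.exp (-u) * g u :=
        setIntegral_mono_on ((integrableOn_exp_neg_Ioi T).mul_const _) (hint T) measurableSet_Ioi
          fun u hu => mul_le_mul_of_nonneg_left (hmono (le_of_lt hu)) (Real.exp_pos _).le
    _ ≤ ∫ u in Set.Ioi 0, Real.exp (-u) * g u :=
        setIntegral_mono_set (hint 0) (ae_of_all _ fun u => mul_nonneg (Real.exp_pos _).le (hg0 u))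
          (Set.Ioi_subset_Ioi hT).eventuallyLE

variable {r : ℕ}

theorem exp_neg_mul_min_frobNorm_le_dU (x y : ℝ → Matrix (Fin r) (Fin r) ℝ) {s T : ℝ}
    (hs : s ∈ Set.Icc 0 T) :
    Real.exp (-T) * min (frobNorm (x s - y s)) 1 ≤ dU x y := by
  set v : ℝ → ℝ := fun t => min (frobNorm (x t - y t)) 1
  have hv0 : ∀ t, 0 ≤ v t := fun t => le_min (Real.sqrt_nonneg _) zero_le_one
  have hbdd : ∀ u, BddAbove (v '' Set.Icc 0 u) := fun u =>
    ⟨1, Set.forall_mem_image.mpr fun t _ => min_le_right _ _⟩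
  set g : ℝ → ℝ := fun u => sSup (v '' Set.Icc 0 u)
  have hg0 : 0 ≤ g := fun u => Real.sSup_nonneg (Set.forall_mem_image.mpr fun t _ => hv0 t)
  have hmono : Monotone g := fun u u' huu' =>
    Real.sSup_le (Set.forall_mem_image.mpr fun t ht =>
      le_csSup (hbdd u') ⟨t, Set.Icc_subset_Icc_right huu' ht, rfl⟩) (hg0 u')
  have hg1 : ∀ u, g u ≤ 1 := fun u =>
    Real.sSup_le (Set.forall_mem_image.mpr fun t _ => min_le_right _ _) zero_le_one
  calc Real.exp (-T) * v s ≤ Real.exp (-T) * g T :=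
        mul_le_mul_of_nonneg_left (le_csSup (hbdd T) ⟨s, hs, rfl⟩) (Real.exp_pos _).le
    _ ≤ dU x y := exp_neg_mul_le_integral_Ioi_zero hmono hg0 hg1 (hs.1.trans hs.2)

theorem abs_apply_le_frobNorm (M : Matrix (Fin r) (Fin r) ℝ) (i j : Fin r) :
    |M i j| ≤ frobNorm M := by
  rw [← Real.sqrt_sq_eq_abs]
  refine Real.sqrt_le_sqrt ?_
  calc M i j ^ 2 ≤ ∑ k, M i k ^ 2 := single_le_sum (fun _ _ => sq_nonneg _) (mem_univ j)
    _ ≤ ∑ l, ∑ k, M l k ^ 2 :=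
        single_le_sum (f := fun l => ∑ k, M l k ^ 2)
          (fun _ _ => sum_nonneg fun _ _ => sq_nonneg _) (mem_univ i)

theorem abs_apply_sub_lt_of_dU_lt {x y : ℝ → Matrix (Fin r) (Fin r) ℝ} {T δ : ℝ} (hδ : δ ≤ 1)
    (h : dU x y < Real.exp (-T) * δ) {s : ℝ} (hs : s ∈ Set.Icc 0 T) (i j : Fin r) :
    |x s i j - y s i j| < δ := by
  have hmin : min (frobNorm (x s - y s)) 1 < δ :=
    lt_of_mul_lt_mul_left ((exp_neg_mul_min_frobNorm_le_dU x y hs).trans_lt h) (Real.exp_pos _).le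
  have hfrob : frobNorm (x s - y s) < δ := by
    rcases min_lt_iff.mp hmin with h | h
    exacts [h, absurd hδ (not_le.mpr h)]
  exact (abs_apply_le_frobNorm (x s - y s) i j).trans_lt hfrob

end PathMetric

section UniformBound

variable {r : ℕ} {A : ℕ → ℝ → Matrix (Fin r) (Fin r) ℝ}

theorem abs_apply_le_of_stepwise
    (hstep : ∀ N : ℕ, 1 ≤ N → ∀ k : ℕ, ∀ t : ℝ,
      (k : ℝ) / N ≤ t → t < ((k : ℝ) + 1) / N → A N t = A N ((k : ℝ) / N))
    (hstoch : ∀ N : ℕ, 1 ≤ N → ∀ k : ℕ, IsStochastic (1 + ((N : ℝ))⁻¹ • A N ((k : ℝ) / N)))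
    {N : ℕ} (hN : 1 ≤ N) {s : ℝ} (hs : 0 ≤ s) (i j : Fin r) :
    |A N s i j| ≤ N := by
  have hNpos : (0 : ℝ) < N := by exact_mod_cast hN
  have hNs : 0 ≤ (N : ℝ) * s := by positivity
  rw [hstep N hN ⌊(N : ℝ) * s⌋₊ s
    ((div_le_iff₀ hNpos).mpr (by linarith [Nat.floor_le hNs]))
    ((lt_div_iff₀ hNpos).mpr (by linarith [Nat.lt_floor_add_one ((N : ℝ) * s)]))]
  exact abs_apply_le_of_isStochastic_one_add_inv_smul hNpos (hstoch N hN _) i j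

theorem exists_abs_apply_le_of_tendsto_dU {Alim : ℝ → Matrix (Fin r) (Fin r) ℝ}
    (hstep : ∀ N : ℕ, 1 ≤ N → ∀ k : ℕ, ∀ t : ℝ,
      (k : ℝ) / N ≤ t → t < ((k : ℝ) + 1) / N → A N t = A N ((k : ℝ) / N))
    (hstoch : ∀ N : ℕ, 1 ≤ N → ∀ k : ℕ, IsStochastic (1 + ((N : ℝ))⁻¹ • A N ((k : ℝ) / N)))
    (hconv : Tendsto (fun N => dU (A N) Alim) atTop (𝓝 0)) (T : ℝ) :
    ∃ C, ∀ N, 1 ≤ N → ∀ s ∈ Set.Icc 0 T, ∀ i j, |A N s i j| ≤ C := by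
  have hclose : ∀ᶠ N in atTop, ∀ s ∈ Set.Icc 0 T, ∀ i j, |A N s i j - Alim s i j| < 1 / 2 :=
    (hconv.eventually (gt_mem_nhds (by positivity : 0 < Real.exp (-T) * (1 / 2)))).mono
      fun N hN s hs i j => abs_apply_sub_lt_of_dU_lt (by norm_num) hN hs i j
  obtain ⟨N₀, hN₀⟩ := eventually_atTop.mp hclose
  set M := max N₀ 1
  refine ⟨M + 1, fun N hN s hs i j => ?_⟩
  rcases lt_or_ge N M with hNM | hNM
  · have hNM' : (N : ℝ) ≤ M := by exact_mod_cast hNM.le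
    linarith [abs_apply_le_of_stepwise hstep hstoch hN hs.1 i j]
  · have hNclose := abs_lt.mp (hN₀ N (le_trans (le_max_left _ _) hNM) s hs i j)
    have hMclose := abs_lt.mp (hN₀ M (le_max_left _ _) s hs i j)
    have hMbound := abs_le.mp (abs_apply_le_of_stepwise hstep hstoch (le_max_right N₀ 1) hs.1 i j)
    rw [abs_le]
    constructor <;> linarith

theorem floor_mul_div_mem_Icc {N : ℕ} (hN : 0 < N) {t T : ℝ} (ht : 0 ≤ t) (htT : t ≤ T) :
    (⌊(N : ℝ) * t⌋₊ : ℝ) / N ∈ Set.Icc 0 T := by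
  have hNpos : (0 : ℝ) < N := by exact_mod_cast hN
  refine ⟨by positivity, (div_le_iff₀ hNpos).mpr ?_⟩
  nlinarith [Nat.floor_le (by positivity : 0 ≤ (N : ℝ) * t)]

end UniformBound

theorem internal_dynamics_increment_bound_C2_general
    (r : ℕ)
    (A : ℕ → ℝ → Matrix (Fin r) (Fin r) ℝ)
    (Alim : ℝ → Matrix (Fin r) (Fin r) ℝ)
    (hstepwise : ∀ N : ℕ, 1 ≤ N → ∀ k : ℕ, ∀ t : ℝ,
      (k : ℝ) / N ≤ t → t < ((k : ℝ) + 1) / N → A N t = A N ((k : ℝ) / N))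
    (hstoch : ∀ N : ℕ, 1 ≤ N → ∀ k : ℕ,
      IsStochastic (1 + ((N : ℝ))⁻¹ • A N ((k : ℝ) / N)))
    (hconv : Filter.Tendsto (fun N => dU (A N) Alim) Filter.atTop (nhds 0))
    (f : (Fin r → ℝ) → ℝ) (hf : ContDiff ℝ 2 f) (T : ℝ) :
    (∃ C : ℝ, ∀ N : ℕ, 1 ≤ N → ∀ t : ℝ, 0 ≤ t → t ≤ T →
      ∀ n : Fin r → ℕ, ∑ i, n i = N →
        |(N : ℝ) * (SOp N (1 + ((N : ℝ))⁻¹ • A N ((⌊(N : ℝ) * t⌋₊ : ℝ) / N)) f n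
              - f fun i => (n i : ℝ) / N)| ≤ C) ∧
    (∀ ε > 0, ∃ N₀ : ℕ, ∀ N : ℕ, N₀ ≤ N → 1 ≤ N → ∀ t : ℝ, 0 ≤ t → t ≤ T →
      ∀ n : Fin r → ℕ, ∑ i, n i = N →
        |SOp N (1 + ((N : ℝ))⁻¹ • A N ((⌊(N : ℝ) * t⌋₊ : ℝ) / N)) f n
              - f (fun i => (n i : ℝ) / N)| < ε) := by
  obtain ⟨L, hL⟩ := (hf.of_le one_le_two).locallyLipschitz.locallyLipschitzOn
    |>.exists_lipschitzOnWith_of_compact (isCompact_Icc (a := (0 : Fin r → ℝ)) (b := 1))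
  obtain ⟨C, hC⟩ := exists_abs_apply_le_of_tendsto_dU hstepwise hstoch hconv T
  have hbound : ∀ N : ℕ, 1 ≤ N → ∀ t : ℝ, 0 ≤ t → t ≤ T → ∀ n : Fin r → ℕ, ∑ i, n i = N →
      |SOp N (1 + ((N : ℝ))⁻¹ • A N ((⌊(N : ℝ) * t⌋₊ : ℝ) / N)) f n
        - f (fun i => (n i : ℝ) / N)| ≤ L * C / N := fun N hN t ht htT n hn =>
    abs_SOp_one_add_inv_smul_sub_le hN (hstoch N hN _)
      (fun i => neg_le_of_abs_le (hC N hN _ (floor_mul_div_mem_Icc hN ht htT) i i)) hL hn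
  refine ⟨⟨L * C, fun N hN t ht htT n hn => ?_⟩, fun ε hε => ?_⟩
  · have hNpos : (0 : ℝ) < N := by exact_mod_cast hN
    rw [abs_mul, Nat.abs_cast, ← le_div_iff₀' hNpos]
    exact hbound N hN t ht htT n hn
  · obtain ⟨N₀, hN₀⟩ := exists_nat_gt (L * C / ε)
    refine ⟨N₀, fun N hN₀N hN t ht htT n hn => (hbound N hN t ht htT n hn).trans_lt ?_⟩
    have hNpos : (0 : ℝ) < N := by exact_mod_cast hN
    rw [div_lt_iff₀ hNpos, ← div_lt_iff₀' hε]
    exact hN₀.trans_le (by exact_mod_cast hN₀N)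

/-- For every C² function `f` and `T > 0`: boundedness
`sup_(N≥1) sup_(0≤t≤T) sup_(p ∈ K_N) |N(S_(N,[Nt])f(p) − f(p))| < ∞` and convergence
`lim_N sup_(0≤t≤T) sup_(p ∈ K_N) |S_(N,[Nt])f(p) − f(p)| = 0`. -/
theorem internal_dynamics_increment_bound_C2
    (r : ℕ) (hr : 2 ≤ r)
    (A : ℕ → ℝ → Matrix (Fin r) (Fin r) ℝ)
    (Alim : ℝ → Matrix (Fin r) (Fin r) ℝ)
    (hQ : ∀ N : ℕ, 1 ≤ N → ∀ t : ℝ, 0 ≤ t → IsQMatrix (A N t))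
    (hstepwise : ∀ N : ℕ, 1 ≤ N → ∀ k : ℕ, ∀ t : ℝ,
      (k : ℝ) / N ≤ t → t < ((k : ℝ) + 1) / N → A N t = A N ((k : ℝ) / N))
    (hQlim : ∀ t : ℝ, 0 ≤ t → IsQMatrix (Alim t))
    (hcadlag_right : ∀ t : ℝ, 0 ≤ t → ContinuousWithinAt Alim (Set.Ici t) t)
    (hcadlag_left : ∀ t : ℝ, 0 < t →
      ∃ L, Filter.Tendsto Alim (nhdsWithin t (Set.Iio t)) (nhds L))
    (hstoch : ∀ N : ℕ, 1 ≤ N → ∀ k : ℕ,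
      IsStochastic (1 + ((N : ℝ))⁻¹ • A N ((k : ℝ) / N)))
    (hconv : Filter.Tendsto (fun N => dU (A N) Alim) Filter.atTop (nhds 0))
    (f : (Fin r → ℝ) → ℝ) (hf : ContDiff ℝ 2 f) (T : ℝ) (hT : 0 < T) :
    (∃ C : ℝ, ∀ N : ℕ, 1 ≤ N → ∀ t : ℝ, 0 ≤ t → t ≤ T →
      ∀ n : Fin r → ℕ, ∑ i, n i = N →
        |(N : ℝ) * (SOp N (1 + ((N : ℝ))⁻¹ • A N ((⌊(N : ℝ) * t⌋₊ : ℝ) / N)) f n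
              - f fun i => (n i : ℝ) / N)| ≤ C) ∧
    (∀ ε > 0, ∃ N₀ : ℕ, ∀ N : ℕ, N₀ ≤ N → 1 ≤ N → ∀ t : ℝ, 0 ≤ t → t ≤ T →
      ∀ n : Fin r → ℕ, ∑ i, n i = N →
        |SOp N (1 + ((N : ℝ))⁻¹ • A N ((⌊(N : ℝ) * t⌋₊ : ℝ) / N)) f n
              - f (fun i => (n i : ℝ) / N)| < ε) :=
  internal_dynamics_increment_bound_C2_general r A Alim hstepwise hstoch hconv f hf T
end
end

section
/- For every function f : ℝ^r → ℝ of class C², lim_{N→∞} sup_{p ∈ K_N} | N·(T_N f(p) − f(p)) − G_B f(p) | = 0. -/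
open scoped BigOperators NNReal
open Finset MeasureTheory

noncomputable section

/-!
Write `M / N = p + X` with `M ∼ multinomial(N, p)`. Then `E X = 0` and
`E[X_i X_j] = p_i (δ_ij - p_j) / N`, so the first- and second-order Taylor terms of
`T_N f(p) - f(p)` add up to exactly `G_B f(p) / N`. Uniform continuity of `D²f` on the simplex
bounds the Taylor remainder by `ε ‖X‖² + K ‖X‖⁴`, and the binomial moments give
`E ‖X‖² ≤ 1 / N` and `E ‖X‖⁴ ≤ r / N²`, so `N · |E remainder| ≤ ε + K r / N`.
All moments follow from the recursion `E_{N+1}[M_i g(M)] = (N + 1) p_i E_N[g(M + e_i)]`.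
-/

section Taylor

open Set

variable {E F : Type*} [NormedAddCommGroup E] [NormedSpace ℝ E] [NormedAddCommGroup F]
  [NormedSpace ℝ F] {f : E → F}

theorem norm_fderiv_line_sub_le (hf : ContDiff ℝ 2 f) {a v : E} {M : ℝ}
    (hM : ∀ t ∈ Icc (0 : ℝ) 1,
      ‖fderiv ℝ (fderiv ℝ f) (a + t • v) - fderiv ℝ (fderiv ℝ f) a‖ ≤ M) :
    ∀ t ∈ Icc (0 : ℝ) 1, ‖fderiv ℝ f (a + t • v) v - t • fderiv ℝ (fderiv ℝ f) a v v
      - fderiv ℝ f a v‖ ≤ M * ‖v‖ ^ 2 := by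
  have hd2 : Differentiable ℝ (fderiv ℝ f) :=
    (hf.fderiv_right (m := 1) (by norm_num)).differentiable one_ne_zero
  set B := fderiv ℝ (fderiv ℝ f) a
  have hderiv (t : ℝ) : HasDerivAt (fun s : ℝ => fderiv ℝ f (a + s • v) v - s • B v v)
      (fderiv ℝ (fderiv ℝ f) (a + t • v) v v - B v v) t := by
    have hline : HasDerivAt (fun s : ℝ => a + s • v) v t := by
      simpa using ((hasDerivAt_id t).smul_const v).const_add a
    convert ((hd2 _).hasFDerivAt.comp_hasDerivAt t hline).clm_apply (hasDerivAt_const t v)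
      |>.sub ((hasDerivAt_id t).smul_const (B v v)) using 1
    · rfl
    · simp
  have hbound : ∀ s ∈ Ico (0 : ℝ) 1,
      ‖fderiv ℝ (fderiv ℝ f) (a + s • v) v v - B v v‖ ≤ M * ‖v‖ ^ 2 := by
    intro s hs
    rw [← sub_apply, ← sub_apply, pow_two, ← mul_assoc]
    exact (ContinuousLinearMap.le_opNorm _ v).trans (mul_le_mul_of_nonneg_right
      ((ContinuousLinearMap.le_opNorm _ v).trans (mul_le_mul_of_nonneg_right
        (hM s (Ico_subset_Icc_self hs)) (norm_nonneg v))) (norm_nonneg v))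
  intro t ht
  have h := norm_image_sub_le_of_norm_deriv_le_segment'
    (fun s _ => (hderiv s).hasDerivWithinAt) hbound t ht
  simp only [zero_smul, add_zero, sub_zero] at h
  refine h.trans (mul_le_of_le_one_right ?_ ht.2)
  exact (norm_nonneg _).trans (hbound 0 (left_mem_Ico.2 zero_lt_one))

theorem norm_taylor_two_remainder_le (hf : ContDiff ℝ 2 f) {a v : E} {M : ℝ}
    (hM : ∀ t ∈ Icc (0 : ℝ) 1,
      ‖fderiv ℝ (fderiv ℝ f) (a + t • v) - fderiv ℝ (fderiv ℝ f) a‖ ≤ M) :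
    ‖f (a + v) - f a - fderiv ℝ f a v - (1 / 2 : ℝ) • fderiv ℝ (fderiv ℝ f) a v v‖
      ≤ M * ‖v‖ ^ 2 := by
  have hd1 : Differentiable ℝ f := hf.differentiable (by norm_num)
  set B := fderiv ℝ (fderiv ℝ f) a
  have hderiv (t : ℝ) : HasDerivAt (fun s : ℝ => f (a + s • v) - s • fderiv ℝ f a v
      - (s ^ 2 / 2) • B v v) (fderiv ℝ f (a + t • v) v - t • B v v - fderiv ℝ f a v) t := by
    have hline : HasDerivAt (fun s : ℝ => a + s • v) v t := by
      simpa using ((hasDerivAt_id t).smul_const v).const_add a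
    convert (((hd1 _).hasFDerivAt.comp_hasDerivAt t hline).sub
      ((hasDerivAt_id t).smul_const (fderiv ℝ f a v))).sub
      (((hasDerivAt_pow 2 t).div_const 2).smul_const (B v v)) using 1
    · rfl
    · norm_num
      abel
  have h := norm_image_sub_le_of_norm_deriv_le_segment_01' (fun t _ => (hderiv t).hasDerivWithinAt)
    fun t ht => norm_fderiv_line_sub_le hf hM t (Ico_subset_Icc_self ht)
  convert h using 2
  norm_num
  abel

theorem IsCompact.exists_norm_taylor_two_remainder_le {Q : Set E} (hQ : IsCompact Q)
    (hQc : Convex ℝ Q) (hf : ContDiff ℝ 2 f) {ε : ℝ} (hε : 0 < ε) :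
    ∃ K, 0 ≤ K ∧ ∀ a ∈ Q, ∀ b ∈ Q,
      ‖f b - f a - fderiv ℝ f a (b - a) - (1 / 2 : ℝ) • fderiv ℝ (fderiv ℝ f) a (b - a) (b - a)‖
        ≤ ε * ‖b - a‖ ^ 2 + K * ‖b - a‖ ^ 4 := by
  have hcont : Continuous (fderiv ℝ (fderiv ℝ f)) :=
    (hf.fderiv_right (m := 1) (by norm_num)).continuous_fderiv one_ne_zero
  obtain ⟨C, hC⟩ := hQ.exists_bound_of_continuousOn (f := fderiv ℝ (fderiv ℝ f)) hcont.continuousOn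
  obtain ⟨δ, hδ, hδQ⟩ := (Metric.uniformContinuousOn_iff (f := fderiv ℝ (fderiv ℝ f))).1
    (hQ.uniformContinuousOn_of_continuous hcont.continuousOn) ε hε
  refine ⟨2 * |C| / δ ^ 2, by positivity, fun a ha b hb => ?_⟩
  have hosc : ∀ t ∈ Icc (0 : ℝ) 1, ‖fderiv ℝ (fderiv ℝ f) (a + t • (b - a))
      - fderiv ℝ (fderiv ℝ f) a‖ ≤ ε + 2 * |C| / δ ^ 2 * ‖b - a‖ ^ 2 := by
    intro t ht
    have hx := hQc.add_smul_sub_mem ha hb ht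
    rcases lt_or_ge ‖b - a‖ δ with hnear | hfar
    · have hdist : dist (a + t • (b - a)) a < δ := by
        rw [dist_eq_norm, add_sub_cancel_left, norm_smul, Real.norm_of_nonneg ht.1]
        exact (mul_le_of_le_one_left (norm_nonneg _) ht.2).trans_lt hnear
      have := hδQ _ hx a ha hdist
      rw [dist_eq_norm (fderiv ℝ (fderiv ℝ f) _)] at this
      have : 0 ≤ 2 * |C| / δ ^ 2 * ‖b - a‖ ^ 2 := by positivity
      linarith
    · have h2C : 2 * |C| ≤ 2 * |C| / δ ^ 2 * ‖b - a‖ ^ 2 := by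
        rw [div_mul_eq_mul_div, le_div_iff₀ (by positivity)]
        gcongr
      linarith [norm_sub_le (fderiv ℝ (fderiv ℝ f) (a + t • (b - a))) (fderiv ℝ (fderiv ℝ f) a),
        hC _ hx, hC a ha, le_abs_self C]
  have h := norm_taylor_two_remainder_le hf hosc
  rw [add_sub_cancel] at h
  linarith

end Taylor

theorem pi_norm_pow_le_sum_norm_pow {ι E : Type*} [Fintype ι] [SeminormedAddGroup E] (v : ι → E)
    {n : ℕ} (hn : n ≠ 0) : ‖v‖ ^ n ≤ ∑ i, ‖v i‖ ^ n := by
  rcases isEmpty_or_nonempty ι with hι | hι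
  · simp [Subsingleton.elim v 0, hn]
  · obtain ⟨i, -, hi⟩ := exists_mem_eq_sup univ univ_nonempty fun i => ‖v i‖₊
    have hvi : ‖v‖ = ‖v i‖ := by rw [Pi.norm_def, hi]; rfl
    rw [hvi]
    exact single_le_sum (f := fun i => ‖v i‖ ^ n) (fun _ _ => by positivity) (mem_univ i)

section Coordinates

variable {ι F : Type*} [Fintype ι] [DecidableEq ι] [NormedAddCommGroup F] [NormedSpace ℝ F]

theorem ContinuousLinearMap.apply_eq_sum_smul_single (L : (ι → ℝ) →L[ℝ] F) (v : ι → ℝ) :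
    L v = ∑ i, v i • L (Pi.single i 1) := by
  conv_lhs => rw [← univ_sum_single v]
  refine (map_sum L _ _).trans (sum_congr rfl fun i _ => ?_)
  rw [← map_smul, ← Pi.single_smul, smul_eq_mul, mul_one]

theorem ContinuousLinearMap.apply_apply_eq_sum_mul_single (B : (ι → ℝ) →L[ℝ] (ι → ℝ) →L[ℝ] ℝ)
    (v : ι → ℝ) : B v v = ∑ i, ∑ j, v i * v j * B (Pi.single i 1) (Pi.single j 1) := by
  rw [(B v).apply_eq_sum_smul_single v, sum_comm]
  simp only [B.apply_eq_sum_smul_single v, _root_.sum_apply, smul_apply, smul_eq_mul, mul_sum]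
  exact sum_congr rfl fun i _ => sum_congr rfl fun j _ => by ring

end Coordinates

theorem GB_eq_sum_mul_fderiv_fderiv {r : ℕ} {f : (Fin r → ℝ) → ℝ} {p : Fin r → ℝ}
    (hf : DifferentiableAt ℝ (fderiv ℝ f) p) :
    GB f p = 1 / 2 * ∑ i, ∑ j, p i * ((if i = j then 1 else 0) - p j)
      * fderiv ℝ (fderiv ℝ f) p (Pi.single i 1) (Pi.single j 1) := by
  simp [GB, fderiv_clm_apply hf (differentiableAt_const _)]

namespace MultinomialSampling

variable {r : ℕ}

theorem succ_mul_multinomial_add_single (β : Fin r → ℕ) (i : Fin r) :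
    (β i + 1) * Nat.multinomial univ (β + Pi.single i 1)
      = (∑ j, β j + 1) * Nat.multinomial univ β := by
  classical
  have hsplit (γ : Fin r → ℕ) : Nat.multinomial univ γ
      = (γ i + ∑ j ∈ univ.erase i, γ j).choose (γ i) * Nat.multinomial (univ.erase i) γ := by
    rw [← Nat.multinomial_insert (notMem_erase i _), insert_erase (mem_univ i)]
  have hoff : ∀ j ∈ univ.erase i, (β + Pi.single i 1 : Fin r → ℕ) j = β j := fun j hj => by
    simp [(mem_erase.1 hj).1]
  rw [hsplit, hsplit β, Nat.multinomial_congr hoff, sum_congr rfl hoff,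
    ← add_sum_erase _ _ (mem_univ i)]
  simp only [Pi.add_apply, Pi.single_eq_same]
  rw [← mul_assoc, ← mul_assoc, Nat.add_one_mul_choose_eq, add_right_comm]
  ring


theorem succ_mul_multinomialWeight_add_single (p : Fin r → ℝ) (β : Fin r → ℕ) (i : Fin r) :
    ((β i : ℝ) + 1) * multinomialWeight p (β + Pi.single i 1)
      = ((∑ j, β j : ℕ) + 1) * p i * multinomialWeight p β := by
  have hprod : ∏ j, p j ^ (β + Pi.single i 1 : Fin r → ℕ) j = p i * ∏ j, p j ^ β j := by
    simp only [Pi.add_apply, pow_add, prod_mul_distrib, mul_comm (p i)]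
    congr 1
    simp [Pi.single_apply]
  have hcoef := congrArg (Nat.cast (R := ℝ)) (succ_mul_multinomial_add_single β i)
  unfold multinomialWeight
  rw [hprod]
  push_cast at hcoef ⊢
  linear_combination (p i * ∏ j, p j ^ β j) * hcoef

/-- `multinomialExpect N p g` is `E[g(M)]` for `M ~ multinomial(N, p)`. -/
def multinomialExpect (N : ℕ) (p : Fin r → ℝ) (g : (Fin r → ℕ) → ℝ) : ℝ :=
  ∑ β ∈ Nat.antidiagonalTuple r N, multinomialWeight p β * g β

theorem multinomialExpect_succ_coord_mul (N : ℕ) (p : Fin r → ℝ) (i : Fin r)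
    (g : (Fin r → ℕ) → ℝ) :
    multinomialExpect (N + 1) p (fun β => β i * g β)
      = (N + 1) * p i * multinomialExpect N p (fun β => g (β + Pi.single i 1)) := by
  classical
  unfold multinomialExpect
  rw [mul_sum, ← sum_filter_of_ne (p := fun β => β i ≠ 0) fun β _ h hi => h (by simp [hi])]
  symm
  have hcancel {γ : Fin r → ℕ} (hγ : γ i ≠ 0) : γ - Pi.single i 1 + Pi.single i 1 = γ := by
    refine tsub_add_cancel_of_le fun j => ?_
    rcases eq_or_ne j i with rfl | hj
    · simpa [Nat.one_le_iff_ne_zero] using hγ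
    · simp [hj]
  refine sum_nbij' (· + Pi.single i 1) (· - Pi.single i 1) ?_ ?_ ?_ ?_ ?_
  · intro β hβ
    simp_all [Nat.mem_antidiagonalTuple, sum_add_distrib]
  · intro γ hγ
    simp only [mem_filter, Nat.mem_antidiagonalTuple] at hγ ⊢
    have hsum := congrArg (fun δ : Fin r → ℕ => ∑ j, δ j) (hcancel hγ.2)
    simp only [Pi.add_apply, sum_add_distrib, sum_pi_single', mem_univ, if_true, hγ.1] at hsum
    omega
  · intro β _
    simp
  · intro γ hγ
    exact hcancel (mem_filter.1 hγ).2
  · intro β hβ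
    rw [Nat.mem_antidiagonalTuple] at hβ
    have hw := succ_mul_multinomialWeight_add_single p β i
    rw [hβ] at hw
    simp only [Pi.add_apply, Pi.single_eq_same, Nat.cast_add, Nat.cast_one]
    linear_combination (-g (β + Pi.single i 1)) * hw

/-- `deviation N p β = β / N - p`, written so that it is `0` rather than `-p` when `N = 0`. -/
def deviation (N : ℕ) (p : Fin r → ℝ) (β : Fin r → ℕ) : Fin r → ℝ :=
  fun i => ((β i : ℝ) - N * p i) / N

section Expect

variable {N : ℕ} {p : Fin r → ℝ}

theorem multinomialExpect_congr {g h : (Fin r → ℕ) → ℝ}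
    (hgh : ∀ β ∈ Nat.antidiagonalTuple r N, g β = h β) :
    multinomialExpect N p g = multinomialExpect N p h :=
  sum_congr rfl fun β hβ => by rw [hgh β hβ]

theorem multinomialExpect_add (g h : (Fin r → ℕ) → ℝ) :
    multinomialExpect N p (fun β => g β + h β)
      = multinomialExpect N p g + multinomialExpect N p h := by
  simp only [multinomialExpect, mul_add, sum_add_distrib]

theorem multinomialExpect_sub (g h : (Fin r → ℕ) → ℝ) :
    multinomialExpect N p (fun β => g β - h β)
      = multinomialExpect N p g - multinomialExpect N p h := by
  simp only [multinomialExpect, mul_sub, sum_sub_distrib]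

theorem multinomialExpect_const_mul (c : ℝ) (g : (Fin r → ℕ) → ℝ) :
    multinomialExpect N p (fun β => c * g β) = c * multinomialExpect N p g := by
  simp only [multinomialExpect, mul_sum, mul_left_comm]

theorem multinomialExpect_mul_const (g : (Fin r → ℕ) → ℝ) (c : ℝ) :
    multinomialExpect N p (fun β => g β * c) = multinomialExpect N p g * c := by
  simp only [multinomialExpect, sum_mul, mul_assoc]

theorem multinomialExpect_div_const (g : (Fin r → ℕ) → ℝ) (c : ℝ) :
    multinomialExpect N p (fun β => g β / c) = multinomialExpect N p g / c := by
  simp only [div_eq_mul_inv, multinomialExpect_mul_const]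

theorem multinomialExpect_sum {ι : Type*} (s : Finset ι) (g : ι → (Fin r → ℕ) → ℝ) :
    multinomialExpect N p (fun β => ∑ k ∈ s, g k β) = ∑ k ∈ s, multinomialExpect N p (g k) := by
  simp only [multinomialExpect, mul_sum]
  exact sum_comm

theorem multinomialWeight_nonneg (hp : ∀ i, 0 ≤ p i) (β : Fin r → ℕ) :
    0 ≤ multinomialWeight p β :=
  mul_nonneg (Nat.cast_nonneg _) (prod_nonneg fun j _ => pow_nonneg (hp j) _)

theorem abs_multinomialExpect_le {g h : (Fin r → ℕ) → ℝ} (hp : ∀ i, 0 ≤ p i)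
    (hgh : ∀ β ∈ Nat.antidiagonalTuple r N, |g β| ≤ h β) :
    |multinomialExpect N p g| ≤ multinomialExpect N p h := by
  refine (abs_sum_le_sum_abs _ _).trans (sum_le_sum fun β hβ => ?_)
  rw [abs_mul, abs_of_nonneg (multinomialWeight_nonneg hp β)]
  exact mul_le_mul_of_nonneg_left (hgh β hβ) (multinomialWeight_nonneg hp β)

theorem multinomialExpect_one : multinomialExpect N p (fun _ => 1) = (∑ i, p i) ^ N := by
  have hsupp : Nat.antidiagonalTuple r N = piAntidiag univ N := by
    ext β
    simp [Nat.mem_antidiagonalTuple]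
  simp [multinomialExpect, multinomialWeight, sum_pow_eq_sum_piAntidiag, hsupp]

theorem multinomialExpect_zero (g : (Fin r → ℕ) → ℝ) : multinomialExpect 0 p g = g 0 := by
  have h := Nat.multinomial_spec univ (0 : Fin r → ℕ)
  simp_all [multinomialExpect, multinomialWeight, Nat.antidiagonalTuple_zero_right]

theorem multinomialExpect_const (hp : ∑ i, p i = 1) (c : ℝ) :
    multinomialExpect N p (fun _ => c) = c := by
  rw [← mul_one c, multinomialExpect_const_mul, multinomialExpect_one, hp, one_pow]

theorem multinomialExpect_prod_range_coord_sub (hp : ∑ i, p i = 1) (i : Fin r) (k : ℕ) :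
    ∀ N, multinomialExpect N p (fun β => ∏ m ∈ range k, ((β i : ℝ) - m))
      = (∏ m ∈ range k, ((N : ℝ) - m)) * p i ^ k := by
  induction k with
  | zero => simp [multinomialExpect_const hp]
  | succ k ih =>
    rintro (_ | N)
    · simp [multinomialExpect_zero, prod_range_succ']
    · have hstep := multinomialExpect_succ_coord_mul N p i
        (fun β => ∏ m ∈ range k, ((β i : ℝ) - (m + 1 : ℕ)))
      simp only [Pi.add_apply, Pi.single_eq_same, Nat.cast_add, Nat.cast_one,
        add_sub_add_right_eq_sub, ih] at hstep
      simp only [prod_range_succ', Nat.cast_zero, sub_zero]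
      push_cast at hstep ⊢
      rw [multinomialExpect_congr fun β _ => mul_comm _ _, hstep]
      simp only [add_sub_add_right_eq_sub]
      ring

theorem multinomialExpect_coord (hp : ∑ i, p i = 1) (i : Fin r) :
    multinomialExpect N p (fun β => (β i : ℝ)) = N * p i := by
  simpa using multinomialExpect_prod_range_coord_sub hp i 1 N

theorem multinomialExpect_centered_mul (hp : ∑ i, p i = 1) (i j : Fin r) :
    multinomialExpect N p (fun β => ((β i : ℝ) - N * p i) * ((β j : ℝ) - N * p j))
      = N * p i * ((if i = j then 1 else 0) - p j) := by
  have hsecond : multinomialExpect N p (fun β => (β i : ℝ) * β j)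
      = N * p i * ((N - 1) * p j + if i = j then 1 else 0) := by
    rcases N with _ | N
    · simp [multinomialExpect_zero]
    · rw [multinomialExpect_succ_coord_mul]
      simp only [Pi.add_apply, Pi.single_apply, Nat.cast_add, Nat.cast_ite, Nat.cast_one,
        Nat.cast_zero, multinomialExpect_add, multinomialExpect_coord hp,
        multinomialExpect_const hp, eq_comm (a := j)]
      ring
  simp only [sub_mul, mul_sub, multinomialExpect_sub, multinomialExpect_const_mul,
    multinomialExpect_mul_const, hsecond, multinomialExpect_coord hp, multinomialExpect_const hp]
  split_ifs <;> ring

theorem multinomialExpect_centered_pow_four (hp : ∑ i, p i = 1) (i : Fin r) :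
    multinomialExpect N p (fun β => ((β i : ℝ) - N * p i) ^ 4)
      = N * (p i * (1 - p i)) + 3 * N * (N - 2) * (p i * (1 - p i)) ^ 2 := by
  -- expand in falling factorials, whose moments `multinomialExpect_prod_range_coord_sub` knows
  have hfalling (x a : ℝ) : (x - a) ^ 4
      = ∏ m ∈ range 4, (x - m) + (6 - 4 * a) * ∏ m ∈ range 3, (x - m)
      + (7 - 12 * a + 6 * a ^ 2) * ∏ m ∈ range 2, (x - m)
      + (1 - 4 * a + 6 * a ^ 2 - 4 * a ^ 3) * ∏ m ∈ range 1, (x - m) + a ^ 4 := by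
    simp only [prod_range_succ, prod_range_zero]
    push_cast
    ring
  simp only [hfalling, multinomialExpect_add, multinomialExpect_const_mul,
    multinomialExpect_prod_range_coord_sub hp, multinomialExpect_const hp]
  simp only [prod_range_succ, prod_range_zero]
  push_cast
  ring

theorem multinomialExpect_deviation (hp : ∑ i, p i = 1) (i : Fin r) :
    multinomialExpect N p (fun β => deviation N p β i) = 0 := by
  simp [deviation, multinomialExpect_div_const, multinomialExpect_sub, multinomialExpect_coord hp,
    multinomialExpect_const hp]

theorem multinomialExpect_deviation_mul (hp : ∑ i, p i = 1) (i j : Fin r) :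
    multinomialExpect N p (fun β => deviation N p β i * deviation N p β j)
      = p i * ((if i = j then 1 else 0) - p j) / N := by
  simp only [deviation, div_mul_div_comm, multinomialExpect_div_const,
    multinomialExpect_centered_mul hp]
  rcases eq_or_ne (N : ℝ) 0 with hN | hN
  · simp [hN]
  · field_simp

theorem multinomialExpect_sum_deviation_sq_le (hp : p ∈ stdSimplex ℝ (Fin r)) :
    multinomialExpect N p (fun β => ∑ i, deviation N p β i ^ 2) ≤ 1 / N := by
  simp only [multinomialExpect_sum, sq, multinomialExpect_deviation_mul hp.2, if_true]
  calc ∑ i, p i * (1 - p i) / N ≤ ∑ i, p i / N := by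
        gcongr with i
        nlinarith [hp.1 i]
    _ = 1 / N := by rw [← sum_div, hp.2]

theorem multinomialExpect_sum_deviation_pow_four_le (hp : p ∈ stdSimplex ℝ (Fin r)) :
    multinomialExpect N p (fun β => ∑ i, deviation N p β i ^ 4) ≤ r / N ^ 2 := by
  simp only [deviation, multinomialExpect_sum, div_pow, multinomialExpect_div_const,
    multinomialExpect_centered_pow_four hp.2]
  calc ∑ i, (N * (p i * (1 - p i)) + 3 * N * (N - 2) * (p i * (1 - p i)) ^ 2) / (N : ℝ) ^ 4
      ≤ ∑ _i : Fin r, (N : ℝ) ^ 2 / (N : ℝ) ^ 4 := by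
        gcongr with i
        obtain ⟨hp0, hp1⟩ := mem_Icc_of_mem_stdSimplex hp i
        have hu0 : 0 ≤ p i * (1 - p i) := mul_nonneg hp0 (by linarith)
        have hu4 : p i * (1 - p i) ≤ 1 / 4 := by nlinarith [sq_nonneg (1 - 2 * p i)]
        rcases Nat.eq_zero_or_pos N with rfl | hN
        · simp
        · have hN1 : (1 : ℝ) ≤ N := by exact_mod_cast hN
          nlinarith [mul_le_mul_of_nonneg_left hu4 hu0, mul_nonneg (by linarith : (0:ℝ) ≤ N) hu0]
    _ = r / N ^ 2 := by
        rw [sum_const, card_univ, Fintype.card_fin, nsmul_eq_mul]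
        rcases eq_or_ne (N : ℝ) 0 with hN | hN
        · simp [hN]
        · field_simp

theorem TOp_sub_sub_GB_div_eq {f : (Fin r → ℝ) → ℝ} (hp : ∑ i, p i = 1)
    (hf : DifferentiableAt ℝ (fderiv ℝ f) p) :
    TOp N f p - f p - GB f p / N = multinomialExpect N p fun β =>
      f (fun i => (β i : ℝ) / N) - f p - fderiv ℝ f p (deviation N p β)
        - (1 / 2 : ℝ) • fderiv ℝ (fderiv ℝ f) p (deviation N p β) (deviation N p β) := by
  set B := fderiv ℝ (fderiv ℝ f) p
  have hlin : multinomialExpect N p (fun β => fderiv ℝ f p (deviation N p β)) = 0 := by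
    rw [multinomialExpect_congr fun β _ => (fderiv ℝ f p).apply_eq_sum_smul_single _,
      multinomialExpect_sum]
    simp [multinomialExpect_mul_const, multinomialExpect_deviation hp]
  have hquad : multinomialExpect N p (fun β => B (deviation N p β) (deviation N p β))
      = 2 * GB f p / N := by
    rw [multinomialExpect_congr fun β _ => B.apply_apply_eq_sum_mul_single _,
      multinomialExpect_sum]
    simp only [multinomialExpect_sum, multinomialExpect_mul_const,
      multinomialExpect_deviation_mul hp, GB_eq_sum_mul_fderiv_fderiv hf, mul_sum, sum_div]
    exact sum_congr rfl fun i _ => sum_congr rfl fun j _ => by ring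
  have hT : TOp N f p = multinomialExpect N p fun β => f fun i => (β i : ℝ) / N := rfl
  simp only [multinomialExpect_sub, multinomialExpect_const hp, smul_eq_mul,
    multinomialExpect_const_mul, hlin, hquad, hT]
  ring

end Expect

theorem cast_div_mem_stdSimplex {N : ℕ} (hN : N ≠ 0) {β : Fin r → ℕ} (hβ : ∑ i, β i = N) :
    (fun i => (β i : ℝ) / N) ∈ stdSimplex ℝ (Fin r) :=
  ⟨fun i => by positivity, by rw [← sum_div, ← Nat.cast_sum, hβ, div_self (by simpa)]⟩

theorem cast_div_sub_eq_deviation {N : ℕ} (hN : N ≠ 0) (p : Fin r → ℝ) (β : Fin r → ℕ) :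
    (fun i => (β i : ℝ) / N) - p = deviation N p β := by
  funext i
  simp only [Pi.sub_apply, deviation]
  field_simp

theorem abs_generator_error_le {N : ℕ} {f : (Fin r → ℝ) → ℝ} {ε K : ℝ} (hε : 0 ≤ ε) (hK : 0 ≤ K)
    (hrem : ∀ a ∈ stdSimplex ℝ (Fin r), ∀ b ∈ stdSimplex ℝ (Fin r),
      ‖f b - f a - fderiv ℝ f a (b - a) - (1 / 2 : ℝ) • fderiv ℝ (fderiv ℝ f) a (b - a) (b - a)‖
        ≤ ε * ‖b - a‖ ^ 2 + K * ‖b - a‖ ^ 4)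
    (hN : N ≠ 0) {p : Fin r → ℝ} (hp : p ∈ stdSimplex ℝ (Fin r))
    (hf : DifferentiableAt ℝ (fderiv ℝ f) p) :
    |N * (TOp N f p - f p) - GB f p| ≤ ε + K * r / N := by
  have hNR : (0 : ℝ) < N := by positivity
  have hpointwise : ∀ β ∈ Nat.antidiagonalTuple r N,
      |f (fun i => (β i : ℝ) / N) - f p - fderiv ℝ f p (deviation N p β)
        - (1 / 2 : ℝ) • fderiv ℝ (fderiv ℝ f) p (deviation N p β) (deviation N p β)|
      ≤ ε * ∑ i, deviation N p β i ^ 2 + K * ∑ i, deviation N p β i ^ 4 := by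
    intro β hβ
    have h := hrem p hp _ (cast_div_mem_stdSimplex hN (Nat.mem_antidiagonalTuple.1 hβ))
    rw [cast_div_sub_eq_deviation hN] at h
    rw [← Real.norm_eq_abs]
    refine h.trans (add_le_add (mul_le_mul_of_nonneg_left ?_ hε) (mul_le_mul_of_nonneg_left ?_ hK))
    · simpa [sq_abs] using pi_norm_pow_le_sum_norm_pow (deviation N p β) two_ne_zero
    · simpa [(by decide : Even 4).pow_abs] using
        pi_norm_pow_le_sum_norm_pow (deviation N p β) four_ne_zero
  calc |N * (TOp N f p - f p) - GB f p| = N * |TOp N f p - f p - GB f p / N| := by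
        rw [show (N : ℝ) * (TOp N f p - f p) - GB f p = N * (TOp N f p - f p - GB f p / N) by
          field_simp, abs_mul, abs_of_pos hNR]
    _ ≤ N * (ε * (1 / N) + K * (r / N ^ 2)) := by
        rw [TOp_sub_sub_GB_div_eq hp.2 hf]
        gcongr
        refine (abs_multinomialExpect_le hp.1 hpointwise).trans ?_
        rw [multinomialExpect_add, multinomialExpect_const_mul, multinomialExpect_const_mul]
        gcongr
        · exact multinomialExpect_sum_deviation_sq_le hp
        · exact multinomialExpect_sum_deviation_pow_four_le hp
    _ = ε + K * r / N := by field_simp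

end MultinomialSampling

open MultinomialSampling in
theorem multinomial_sampling_generator_convergence_general
    (r : ℕ)
    (f : (Fin r → ℝ) → ℝ) (hf : ContDiff ℝ 2 f) :
    ∀ ε > 0, ∃ N₀ : ℕ, ∀ N : ℕ, N₀ ≤ N → 1 ≤ N →
      ∀ α : Fin r → ℕ, ∑ i, α i = N →
        |(N : ℝ) * (TOp N f (fun i => (α i : ℝ) / N) - f fun i => (α i : ℝ) / N)
          - GB f (fun i => (α i : ℝ) / N)| < ε := by
  intro ε hε
  obtain ⟨K, hK, hrem⟩ := (isCompact_stdSimplex ℝ (Fin r)).exists_norm_taylor_two_remainder_le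
    (convex_stdSimplex ℝ (Fin r)) hf (half_pos hε)
  obtain ⟨N₀, hN₀⟩ := exists_nat_gt (2 * K * r / ε)
  refine ⟨N₀, fun N hN hN1 α hα => ?_⟩
  have hN0 : N ≠ 0 := by omega
  have hKN : K * r / N < ε / 2 := by
    have : 2 * K * r / ε < N := hN₀.trans_le (by exact_mod_cast hN)
    rw [div_lt_iff₀ hε] at this
    rw [div_lt_iff₀ (by positivity)]
    linarith
  have hd2 : Differentiable ℝ (fderiv ℝ f) :=
    (hf.fderiv_right (m := 1) (by norm_num)).differentiable one_ne_zero
  refine (abs_generator_error_le (half_pos hε).le hK hrem hN0 (cast_div_mem_stdSimplex hN0 hα)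
    (hd2 _)).trans_lt ?_
  linarith

/-- Wright–Fisher generator convergence for the multinomial-sampling operator:
for every C² function `f`,
`lim_N sup_(p ∈ K_N) |N(T_N f(p) − f(p)) − G_B f(p)| = 0`. -/
theorem multinomial_sampling_generator_convergence
    (r : ℕ) (hr : 2 ≤ r)
    (f : (Fin r → ℝ) → ℝ) (hf : ContDiff ℝ 2 f) :
    ∀ ε > 0, ∃ N₀ : ℕ, ∀ N : ℕ, N₀ ≤ N → 1 ≤ N →
      ∀ α : Fin r → ℕ, ∑ i, α i = N →
        |(N : ℝ) * (TOp N f (fun i => (α i : ℝ) / N) - f fun i => (α i : ℝ) / N)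
          - GB f (fun i => (α i : ℝ) / N)| < ε :=
  multinomial_sampling_generator_convergence_general r f hf
end
end
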